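/- arXiv:1508.07257 — 10 statements merged into one kernel-verified Lean document; each statement's English description precedes it below -/
import Mathlib

section
/- The stabilizer of the zero vertex in the automorphism group of the augmented cube graph AQ_3 is isomorphic to the direct product D_8 × C_2 of the dihedral group of order 8 with the cyclic group of order 2. -/
/-- The standard basis vector `e_j` of `𝔽₂ⁿ`. -/
def stdBasis (n : ℕ) (j : Fin n) : Fin n → ZMod 2 := fun i => if i = j then 1 else 0

/-- The vector `v_k` of `𝔽₂ⁿ` having `1` in its last `k` coordinates and `0` elsewhere. -/
def lastOnes (n k : ℕ) : Fin n → ZMod 2 := fun i => if n - k ≤ i.val then 1 else 0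

/-- The generating set `S_n` of the augmented cube. -/
def genSet (n : ℕ) : Set (Fin n → ZMod 2) :=
  {x | (∃ j : Fin n, x = stdBasis n j) ∨ ∃ k : ℕ, 2 ≤ k ∧ k ≤ n ∧ x = lastOnes n k}

/-- The augmented cube graph `AQ_n`. -/
def AQ (n : ℕ) : SimpleGraph (Fin n → ZMod 2) where
  Adj x y := x ≠ y ∧ x + y ∈ genSet n
  symm := ⟨fun x y h => ⟨h.1.symm, by rw [add_comm]; exact h.2⟩⟩
  loopless := ⟨fun x h => h.1 rfl⟩

/-- The stabilizer of the zero vertex in the automorphism group of `AQ_n`. -/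
def zeroStab (n : ℕ) : Subgroup (AQ n ≃g AQ n) where
  carrier := {g | g 0 = 0}
  one_mem' := rfl
  mul_mem' := by
    intro a b ha hb
    show a (b 0) = 0
    rw [show b 0 = 0 from hb, show a 0 = 0 from ha]
  inv_mem' := by
    intro a ha
    show a.symm 0 = 0
    conv_lhs => rw [← show a 0 = 0 from ha]
    exact a.symm_apply_apply 0

/-!
The complement of `AQ₃` is the Cayley graph of `𝔽₂³` with connection set `{110, 101}`, i.e. the two
4-cycles `000 – 110 – 011 – 101` and `100 – 010 – 111 – 001`. An automorphism fixing `000` preserves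
the first cycle, where it is the identity or the reflection through `000`, and acts on the second by
any symmetry of the square; this realises `D₈ × C₂` inside the stabiliser. Conversely, every vertex
outside `{000, 110, 100, 010}` is determined by its neighbours in that set, so an automorphism is
determined by its values there, and each adjacency-preserving injection of these four vertices that
fixes `000` is realised by an element of `D₈ × C₂`.
-/

theorem mem_genSet_iff {n : ℕ} {x : Fin n → ZMod 2} :
    x ∈ genSet n ↔ (∃ j, x = stdBasis n j) ∨ ∃ k ∈ Finset.Icc 2 n, x = lastOnes n k := by
  simp [genSet, and_assoc]

instance genSet.decidableMem (n : ℕ) : DecidablePred (· ∈ genSet n) := fun _ =>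
  decidable_of_iff' _ mem_genSet_iff

instance AQ.decidableAdj (n : ℕ) : DecidableRel (AQ n).Adj := fun x y =>
  decidable_of_iff (x ≠ y ∧ x + y ∈ genSet n) Iff.rfl

namespace DihedralGroup

variable (n : ℕ)

def toPerm : DihedralGroup n →* Equiv.Perm (ZMod n) where
  toFun
    | r i => Equiv.subRight i
    | sr i => Equiv.subLeft i
  map_one' := by ext x; exact sub_zero x
  map_mul' := by
    rintro (i | i) (j | j) <;> ext x <;> simp [r_mul_r, r_mul_sr, sr_mul_r, sr_mul_sr] <;> ring

def reflHom : Multiplicative (ZMod 2) →* DihedralGroup n :=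
  MonoidHom.mk' (fun c => sr 0 ^ c.toAdd.val) fun a b => by
    have h := pow_mod_orderOf (sr (0 : ZMod n)) (a.toAdd.val + b.toAdd.val)
    rwa [orderOf_sr, pow_add] at h

variable {n}

theorem toPerm_injective (hn : 2 < n) : Function.Injective (toPerm n) := by
  refine (injective_iff_map_eq_one _).2 ?_
  rintro (i | i) h
  · have h0 := Equiv.congr_fun h 0
    simp only [toPerm, MonoidHom.coe_mk, OneHom.coe_mk, Equiv.subRight_apply, zero_sub,
      Equiv.Perm.coe_one, id_eq, neg_eq_zero] at h0
    rw [h0, r_zero]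
  · have h0 := Equiv.congr_fun h 0
    have h1 := Equiv.congr_fun h 1
    simp only [toPerm, MonoidHom.coe_mk, OneHom.coe_mk, Equiv.subLeft_apply, sub_zero,
      Equiv.Perm.coe_one, id_eq] at h0 h1
    have two_eq_zero : ((2 : ℕ) : ZMod n) = 0 := by
      rw [h0] at h1
      push_cast
      linear_combination -h1
    exact absurd (Nat.le_of_dvd two_pos ((ZMod.natCast_eq_zero_iff 2 n).1 two_eq_zero)) (by omega)

theorem reflHom_injective : Function.Injective (reflHom n) := by
  refine (injective_iff_map_eq_one _).2 fun c hc => ?_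
  fin_cases c
  · rfl
  · change sr 0 ^ 1 = 1 at hc
    rw [pow_one, one_def] at hc
    cases hc

end DihedralGroup

namespace SimpleGraph

variable {V H : Type*} {G : SimpleGraph V}

theorem Iso.eq_one_of_forall_mem_apply_eq_self {S : Set V}
    (hS : ∀ x ∉ S, ∀ y ∉ S, (∀ s ∈ S, G.Adj s x ↔ G.Adj s y) → x = y)
    {w : G ≃g G} (hw : ∀ s ∈ S, w s = s) : w = 1 := by
  refine RelIso.ext fun x => ?_
  by_cases hx : x ∈ S
  · exact hw x hx
  refine hS _ (fun hwx => hx ?_) x hx fun s hs => ?_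
  · rwa [← w.injective (hw _ hwx)]
  · conv_lhs => rw [← hw s hs]
    exact w.map_adj_iff

variable [Group H]

def autOfPermHom (Φ : H →* Equiv.Perm V) (hΦ : ∀ h x y, G.Adj (Φ h x) (Φ h y) ↔ G.Adj x y) :
    H →* G ≃g G where
  toFun h := ⟨Φ h, hΦ h _ _⟩
  map_one' := RelIso.ext fun x => by simp
  map_mul' _ _ := RelIso.ext fun x => by simp

theorem autOfPermHom_injective {Φ : H →* Equiv.Perm V}
    (hΦ : ∀ h x y, G.Adj (Φ h x) (Φ h y) ↔ G.Adj x y) (hinj : Function.Injective Φ) :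
    Function.Injective (autOfPermHom Φ hΦ) :=
  fun _ _ h => hinj (congrArg RelIso.toEquiv h)

end SimpleGraph

local notation "V₃" => Fin 3 → ZMod 2

/-- The two blocks list the 4-cycles of the complement of `AQ₃` in cyclic order, the second one
starting at `000`. -/
def cycleLabel : ZMod 4 ⊕ ZMod 4 → V₃ :=
  Sum.elim ![![1, 0, 0], ![0, 1, 0], ![1, 1, 1], ![0, 0, 1]]
    ![0, ![1, 1, 0], ![0, 1, 1], ![1, 0, 1]]

theorem cycleLabel_bijective : Function.Bijective cycleLabel := by decide

-- `Fintype.bijInv` rather than `Equiv.ofBijective`, so that `decide` can evaluate the inverse.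
def cycleEquiv : ZMod 4 ⊕ ZMod 4 ≃ V₃ where
  toFun := cycleLabel
  invFun := Fintype.bijInv cycleLabel_bijective
  left_inv := Fintype.leftInverse_bijInv _
  right_inv := Fintype.rightInverse_bijInv _

def dihedralPerm : DihedralGroup 4 × Multiplicative (ZMod 2) →* Equiv.Perm V₃ :=
  cycleEquiv.permCongrHom.toMonoidHom.comp <| (Equiv.Perm.sumCongrHom _ _).comp <|
    (DihedralGroup.toPerm 4).prodMap ((DihedralGroup.toPerm 4).comp (DihedralGroup.reflHom 4))

theorem dihedralPerm_injective : Function.Injective dihedralPerm :=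
  cycleEquiv.permCongrHom.injective.comp <| Equiv.Perm.sumCongrHom_injective.comp <|
    (DihedralGroup.toPerm_injective (by norm_num)).prodMap <|
      (DihedralGroup.toPerm_injective (by norm_num)).comp DihedralGroup.reflHom_injective

theorem dihedralPerm_adj_iff :
    ∀ p x y, (AQ 3).Adj (dihedralPerm p x) (dihedralPerm p y) ↔ (AQ 3).Adj x y := by
  decide

theorem dihedralPerm_apply_zero : ∀ p, dihedralPerm p 0 = 0 := by decide

def baseVertices : Fin 4 → V₃ := ![0, ![1, 1, 0], ![1, 0, 0], ![0, 1, 0]]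

theorem baseVertices_injective : Function.Injective baseVertices := by decide

theorem baseVertices_separating : ∀ x ∉ Set.range baseVertices, ∀ y ∉ Set.range baseVertices,
    (∀ s ∈ Set.range baseVertices, (AQ 3).Adj s x ↔ (AQ 3).Adj s y) → x = y := by
  simp only [Set.mem_range, not_exists]
  decide

theorem exists_dihedralPerm_extending (a c d : V₃)
    (hadj : ∀ i j, (AQ 3).Adj (![0, a, c, d] i) (![0, a, c, d] j) ↔
      (AQ 3).Adj (baseVertices i) (baseVertices j))
    (hinj : Function.Injective ![0, a, c, d]) :
    ∃ p, ∀ i, dihedralPerm p (baseVertices i) = ![0, a, c, d] i := by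
  revert a c d
  decide

def toZeroStab : DihedralGroup 4 × Multiplicative (ZMod 2) →* zeroStab 3 :=
  (SimpleGraph.autOfPermHom dihedralPerm dihedralPerm_adj_iff).codRestrict _ dihedralPerm_apply_zero

theorem toZeroStab_injective : Function.Injective toZeroStab := fun _ _ h =>
  SimpleGraph.autOfPermHom_injective dihedralPerm_adj_iff dihedralPerm_injective
    (congrArg Subtype.val h)

theorem toZeroStab_surjective : Function.Surjective toZeroStab := by
  rintro ⟨u, hu : u 0 = 0⟩
  have hbase :
      ![0, u (baseVertices 1), u (baseVertices 2), u (baseVertices 3)] = u ∘ baseVertices := by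
    funext i
    fin_cases i <;> simp [baseVertices, hu]
  obtain ⟨p, hp⟩ := exists_dihedralPerm_extending _ _ _
    (by rw [hbase]; exact fun i j => u.map_adj_iff)
    (by rw [hbase]; exact u.injective.comp baseVertices_injective)
  rw [hbase] at hp
  refine ⟨p, Subtype.ext (inv_mul_eq_one.1 <|
    SimpleGraph.Iso.eq_one_of_forall_mem_apply_eq_self baseVertices_separating ?_)⟩
  rintro _ ⟨i, rfl⟩
  rw [RelIso.mul_apply, ← Function.comp_apply (f := u), ← hp i]
  exact RelIso.inv_apply_self _ _

theorem stabilizer_AQ3_iso_D8_prod_C2 :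
    Nonempty (zeroStab 3 ≃* DihedralGroup 4 × Multiplicative (ZMod 2)) :=
  ⟨(MulEquiv.ofBijective toZeroStab ⟨toZeroStab_injective, toZeroStab_surjective⟩).symm⟩
end

section
/- The group of additive automorphisms of 𝔽₂³ that map the set S_3 = {100, 010, 001, 011, 111} onto itself is isomorphic to the dihedral group D_8 of order 8. -/
/-- The multiplicative group structure on `AddAut A` (composition), as in the older Mathlib. -/
instance AddAut.group (A : Type*) [Add A] : Group (AddAut A) where
  mul g h := AddEquiv.trans h g
  one := AddEquiv.refl _
  inv := AddEquiv.symm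
  mul_assoc _ _ _ := rfl
  one_mul _ := rfl
  mul_one _ := rfl
  inv_mul_cancel := AddEquiv.self_trans_symm

/-- The group of additive automorphisms of `𝔽₂³` mapping `S_3` onto itself. -/
def linStab3 : Subgroup (AddAut (Fin 3 → ZMod 2)) where
  carrier := {f | ⇑f '' genSet 3 = genSet 3}
  one_mem' := by
    show ⇑(AddEquiv.refl (Fin 3 → ZMod 2)) '' genSet 3 = genSet 3
    simp
  mul_mem' := by
    intro a b ha hb
    show ⇑(b.trans a) '' genSet 3 = genSet 3
    have : ⇑(b.trans a) = ⇑a ∘ ⇑b := rfl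
    rw [this, Set.image_comp, Set.mem_setOf_eq.mp hb, Set.mem_setOf_eq.mp ha]
  inv_mem' := by
    intro a ha
    show ⇑a.symm '' genSet 3 = genSet 3
    conv_lhs => rw [← Set.mem_setOf_eq.mp ha, ← Set.image_comp]
    have h : ⇑a.symm ∘ ⇑a = id := funext fun x => a.symm_apply_apply x
    rw [h, Set.image_id]


local notation "𝔽₂³" => Fin 3 → ZMod 2

namespace DihedralGroup

variable {G : Type*} [Group G] {n : ℕ} [NeZero n]

def lift (a b : G) (ha : a ^ n = 1) (hb : b * b = 1) (hab : a * b = b * a⁻¹) :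
    DihedralGroup n →* G where
  toFun
    | r i => a ^ i.val
    | sr i => b * a ^ i.val
  map_one' := by
    change a ^ (0 : ZMod n).val = 1
    rw [ZMod.val_zero, pow_zero]
  map_mul' := by
    have hadd (i j : ZMod n) : a ^ (i + j).val = a ^ i.val * a ^ j.val := by
      rw [ZMod.val_add, ← pow_eq_pow_mod _ ha, pow_add]
    have hneg (i : ZMod n) : a ^ (-i).val = (a ^ i.val)⁻¹ :=
      eq_inv_of_mul_eq_one_left (by rw [← hadd, neg_add_cancel, ZMod.val_zero, pow_zero])
    have hcomm (i : ZMod n) : a ^ i.val * b = b * a ^ (-i).val := by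
      rw [hneg, ← inv_pow]
      exact ((show SemiconjBy b a⁻¹ a from hab.symm).pow_right _).eq.symm
    rintro (i | i) (j | j)
    · exact hadd i j
    · change b * a ^ (j - i).val = a ^ i.val * (b * a ^ j.val)
      rw [← mul_assoc, hcomm, mul_assoc, sub_eq_neg_add, hadd]
    · change b * a ^ (i + j).val = b * a ^ i.val * a ^ j.val
      rw [hadd, mul_assoc]
    · change a ^ (j - i).val = b * a ^ i.val * (b * a ^ j.val)
      rw [sub_eq_neg_add, hadd, ← mul_assoc, mul_assoc b, hcomm, ← mul_assoc, hb, one_mul]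

end DihedralGroup

theorem AddMonoidHom.ext_pi_zmod {ι M : Type*} [Finite ι] [DecidableEq ι] {n : ℕ}
    [AddCommGroup M] [Module (ZMod n) M] {f g : (ι → ZMod n) →+ M}
    (h : ∀ i, f (Pi.single i 1) = g (Pi.single i 1)) : f = g :=
  toZModLinearMap_injective n (LinearMap.pi_ext' fun i => LinearMap.ext_ring (h i))

theorem stdBasis_eq_single (n : ℕ) (j : Fin n) : stdBasis n j = Pi.single j 1 := by
  ext i
  simp [stdBasis, Pi.single_apply]

theorem AddEquiv.ext_stdBasis {n : ℕ} {f g : AddAut (Fin n → ZMod 2)}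
    (h : ∀ j, f (stdBasis n j) = g (stdBasis n j)) : f = g :=
  AddEquiv.toAddMonoidHom_injective <| AddMonoidHom.ext_pi_zmod fun j => by
    simpa [stdBasis_eq_single] using h j

section FrameGenSet

variable {A B F : Type*} [AddCommMonoid A] [AddCommMonoid B] [DecidableEq A] [DecidableEq B]

def frameGenSet (v : Fin 3 → A) : Finset A := {v 0, v 1, v 2, v 1 + v 2, v 0 + v 1 + v 2}

theorem image_frameGenSet [FunLike F A B] [AddHomClass F A B] (f : F) (v : Fin 3 → A) :
    (frameGenSet v).image f = frameGenSet (f ∘ v) := by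
  simp [frameGenSet, Finset.image_insert, map_add]

end FrameGenSet

theorem genSet_three : genSet 3 = frameGenSet (stdBasis 3) := by
  have hlastOnes (x : 𝔽₂³) :
      (∃ k, 2 ≤ k ∧ k ≤ 3 ∧ x = lastOnes 3 k) ↔ x = lastOnes 3 2 ∨ x = lastOnes 3 3 := by
    refine ⟨fun ⟨k, h2, h3, hx⟩ => ?_, ?_⟩
    · interval_cases k <;> simp [hx]
    · rintro (h | h) <;> exact ⟨_, by norm_num, by norm_num, h⟩
  ext x
  simp only [genSet, Set.mem_ofPred_eq, Fin.exists_fin_succ, Fin.exists_fin_zero, hlastOnes,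
    Finset.mem_coe]
  revert x
  decide

theorem mem_linStab3_iff (f : AddAut 𝔽₂³) :
    f ∈ linStab3 ↔ frameGenSet (f ∘ stdBasis 3) = frameGenSet (stdBasis 3) := by
  change f '' genSet 3 = genSet 3 ↔ _
  rw [genSet_three, ← Finset.coe_image, image_frameGenSet, Finset.coe_inj]

def diagReflection : AddAut 𝔽₂³ :=
  AddEquiv.mk'
    (Function.Involutive.toPerm (fun x => ![x 0, x 2, x 1]) (by unfold Function.Involutive; decide))
    (by decide)

def edgeReflection : AddAut 𝔽₂³ :=
  AddEquiv.mk'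
    (Function.Involutive.toPerm (fun x => ![x 1 + x 2, x 0 + x 2, x 2])
      (by unfold Function.Involutive; decide))
    (by decide)

theorem diagReflection_mem_linStab3 : diagReflection ∈ linStab3 :=
  (mem_linStab3_iff _).2 (by decide)

theorem edgeReflection_mem_linStab3 : edgeReflection ∈ linStab3 :=
  (mem_linStab3_iff _).2 (by decide)

def dihedralToLinStab3 : DihedralGroup 4 →* linStab3 :=
  let s : linStab3 := ⟨diagReflection, diagReflection_mem_linStab3⟩
  let t : linStab3 := ⟨edgeReflection, edgeReflection_mem_linStab3⟩
  DihedralGroup.lift (s * t) s (by decide) (by decide) (by decide)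

theorem dihedralToLinStab3_injective : Function.Injective dihedralToLinStab3 := by
  decide

set_option maxRecDepth 10000 in
theorem exists_dihedralToLinStab3_comp_stdBasis_eq : ∀ v : Fin 3 → 𝔽₂³,
    frameGenSet v = frameGenSet (stdBasis 3) →
      ∃ g : DihedralGroup 4, ⇑(dihedralToLinStab3 g : AddAut 𝔽₂³) ∘ stdBasis 3 = v := by
  decide

theorem dihedralToLinStab3_surjective : Function.Surjective dihedralToLinStab3 := by
  rintro ⟨f, hf⟩
  obtain ⟨g, hg⟩ := exists_dihedralToLinStab3_comp_stdBasis_eq _ ((mem_linStab3_iff f).1 hf)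
  exact ⟨g, Subtype.ext (AddEquiv.ext_stdBasis (congrFun hg))⟩

theorem linStab3_iso_D8 : Nonempty (linStab3 ≃* DihedralGroup 4) :=
  ⟨(MulEquiv.ofBijective dihedralToLinStab3
    ⟨dihedralToLinStab3_injective, dihedralToLinStab3_surjective⟩).symm⟩
end

section
/- The augmented cube graph AQ_3 is a non-normal Cayley graph: there exists a graph automorphism g of AQ_3 that fixes the zero vertex but is not additive, i.e., g(x + y) ≠ g(x) + g(y) for some x, y ∈ 𝔽₂³. -/
/-! Since `S₃ ∪ {0}` is invariant under translation by `e₂ + e₃ = v₂`, the vertices `e₂` and `e₃`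
have the same closed neighbourhood, and transposing two such twins is a graph automorphism. This
one fixes `0`, `e₁` and `e₁ + e₂` but moves `e₂`, so it is not additive. -/

def SimpleGraph.Iso.swapOfAdjIff {V : Type*} [DecidableEq V] {G : SimpleGraph V} {u v : V}
    (h : ∀ w, w ≠ u → w ≠ v → (G.Adj u w ↔ G.Adj v w)) : G ≃g G where
  toEquiv := Equiv.swap u v
  map_rel_iff' {x y} := by
    simp only [Equiv.swap_apply_def]
    split_ifs <;> subst_vars <;> grind [SimpleGraph.adj_comm, SimpleGraph.irrefl]

theorem AQ_adj_iff_of_add_mem_iff {n : ℕ} {u v : Fin n → ZMod 2}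
    (h : ∀ s, s ∈ insert 0 (genSet n) ↔ s + (u + v) ∈ insert 0 (genSet n))
    (w : Fin n → ZMod 2) (hu : w ≠ u) (hv : w ≠ v) : (AQ n).Adj u w ↔ (AQ n).Adj v w := by
  have h0 : ∀ x, x ≠ w → x + w ≠ 0 := fun x hx hxw =>
    hx (by rwa [← ZModModule.sub_eq_add, sub_eq_zero] at hxw)
  have hsub : u + w + (u + v) = v + w := by
    rw [add_comm u w, ZModModule.add_add_add_cancel, add_comm]
  have := h (u + w)
  simp only [Set.mem_insert_iff, h0 u hu.symm, h0 v hv.symm, hsub, false_or] at this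
  simp only [AQ, Ne, hu.symm, hv.symm, not_false_eq_true, true_and, this]

theorem genSet_three_s2 : genSet 3 =
    ↑({stdBasis 3 0, stdBasis 3 1, stdBasis 3 2, lastOnes 3 2, lastOnes 3 3} : Finset _) := by
  ext x
  simp only [genSet, Set.mem_ofPred_eq, Finset.coe_insert, Finset.coe_singleton,
    Set.mem_insert_iff, Set.mem_singleton_iff]
  constructor
  · rintro (⟨j, rfl⟩ | ⟨k, hk2, hk3, rfl⟩)
    · fin_cases j <;> simp
    · interval_cases k <;> simp
  · rintro (rfl | rfl | rfl | rfl | rfl)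
    exacts [.inl ⟨0, rfl⟩, .inl ⟨1, rfl⟩, .inl ⟨2, rfl⟩, .inr ⟨2, le_rfl, by norm_num, rfl⟩,
      .inr ⟨3, by norm_num, le_rfl, rfl⟩]

theorem mem_insert_zero_genSet_three_iff_add_mem (s : Fin 3 → ZMod 2) :
    s ∈ insert 0 (genSet 3) ↔ s + (stdBasis 3 1 + stdBasis 3 2) ∈ insert 0 (genSet 3) := by
  rw [genSet_three_s2, ← Finset.coe_insert, Finset.mem_coe, Finset.mem_coe]
  revert s
  decide

/-- `AQ_3` is a non-normal Cayley graph: some automorphism fixing the zero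
vertex is not additive. -/
theorem AQ3_nonnormal :
    ∃ g : AQ 3 ≃g AQ 3, g 0 = 0 ∧ ∃ x y : Fin 3 → ZMod 2, g (x + y) ≠ g x + g y :=
  ⟨.swapOfAdjIff (AQ_adj_iff_of_add_mem_iff mem_insert_zero_genSet_three_iff_add_mem),
    by decide, stdBasis 3 0, stdBasis 3 1, by decide⟩
end

section
/- The automorphism group of the augmented cube graph AQ_3 is isomorphic to the semidirect product (D_8 × D_8) ⋊ C_2, where the nontrivial element of C_2 acts on D_8 × D_8 by swapping the two coordinates. -/
/-- The dihedral group of order 8. -/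
abbrev D8 := DihedralGroup 4

/-- The swap automorphism of `D_8 × D_8`, sending `(a, b)` to `(b, a)`. -/
def swapAut : MulAut (D8 × D8) := (MulEquiv.prodComm : D8 × D8 ≃* D8 × D8)

/-- The action of `C_2` on `D_8 × D_8` in which the nontrivial element swaps
the two coordinates. -/
def swapφ : Multiplicative (ZMod 2) →* MulAut (D8 × D8) where
  toFun c := if c.toAdd = 0 then 1 else swapAut
  map_one' := rfl
  map_mul' := by
    intro x y
    induction x using Multiplicative.rec with | _ x =>
    induction y using Multiplicative.rec with | _ y =>
    have h : ∀ z : ZMod 2, z = 0 ∨ z = 1 := by decide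
    rcases h x with rfl | rfl <;> rcases h y with rfl | rfl <;>
      · ext p <;>
          simp [swapAut, MulAut.mul_def, MulEquiv.prodComm,
            (by decide : (1 + 1 : ZMod 2) = 0)]


/-! The sum of two distinct vertices of `AQ 3` lies outside `S_3` only when it is `110` or `101`,
so the complement of `AQ 3` is the Cayley graph of `𝔽₂³` on `{110, 101}`: two disjoint 4-cycles,
the cosets of `⟨110, 101⟩`. A graph and its complement have the same automorphisms. An
automorphism of two disjoint copies of a connected graph `G` maps copies to copies, hence is a
permutation of the two copies combined with an automorphism of each, which gives
`Aut (AQ 3) ≃* (Aut C₄ × Aut C₄) ⋊ C₂`. Finally `D₈` acts faithfully on `C₄ = ℤ/4` by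
`j ↦ i + j` and `j ↦ -i - j`, and these are all of its automorphisms. -/

open SimpleGraph

lemma ZMod.eq_add_one_of_ne {a b : ZMod 2} (h : a ≠ b) : a = b + 1 := by
  revert a b
  decide

section ProdSwap

def prodSwapHom (N : Type*) [Group N] : Multiplicative (ZMod 2) →* MulAut (N × N) where
  toFun c := if c.toAdd = 0 then 1 else MulEquiv.prodComm
  map_one' := rfl
  map_mul' x y := by
    induction x using Multiplicative.rec with | _ x =>
    induction y using Multiplicative.rec with | _ y =>
    fin_cases x <;> fin_cases y <;> ext <;> rfl

def prodSwapSemidirectCongr {M N : Type*} [Group M] [Group N] (e : M ≃* N) :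
    (M × M) ⋊[prodSwapHom M] Multiplicative (ZMod 2) ≃*
      (N × N) ⋊[prodSwapHom N] Multiplicative (ZMod 2) :=
  SemidirectProduct.congr (e.prodCongr e) (.refl _) fun c => by
    induction c using Multiplicative.rec with | _ c =>
    fin_cases c <;> ext <;> rfl

variable {N : Type*}

def pairAt (n : N × N) (k : ZMod 2) : N := if k = 0 then n.1 else n.2

lemma pairAt_mk (x : ZMod 2 → N) (k : ZMod 2) : pairAt (x 0, x 1) k = x k := by
  fin_cases k <;> rfl

variable [Group N]

lemma pairAt_one (k : ZMod 2) : pairAt (1 : N × N) k = 1 := by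
  fin_cases k <;> rfl

lemma pairAt_mul (n m : N × N) (k : ZMod 2) : pairAt (n * m) k = pairAt n k * pairAt m k := by
  fin_cases k <;> rfl

lemma pairAt_prodSwapHom (c : Multiplicative (ZMod 2)) (n : N × N) (k : ZMod 2) :
    pairAt (prodSwapHom N c n) k = pairAt n (c.toAdd + k) := by
  induction c using Multiplicative.rec with | _ c =>
  fin_cases c <;> fin_cases k <;> rfl

end ProdSwap

namespace SimpleGraph

section Compl

variable {V W : Type*} {G : SimpleGraph V} {H : SimpleGraph W}

def Iso.compl (e : G ≃g H) : Gᶜ ≃g Hᶜ :=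
  ⟨e.toEquiv, by simp [e.injective.ne_iff, e.map_adj_iff]⟩

@[simp]
lemma Iso.compl_apply (e : G ≃g H) (v : V) : e.compl v = e v := rfl

def Iso.autCongr (e : G ≃g H) : (G ≃g G) ≃* (H ≃g H) where
  toFun f := (e.symm.trans f).trans e
  invFun f := (e.trans f).trans e.symm
  left_inv f := by ext; simp
  right_inv f := by ext; simp
  map_mul' f g := by ext; simp

def autComplEquiv : (G ≃g G) ≃* (Gᶜ ≃g Gᶜ) where
  toFun := Iso.compl
  invFun f := ⟨f.toEquiv, fun {v w} => by simpa using f.compl.map_adj_iff (v := v) (w := w)⟩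
  left_inv _ := rfl
  right_inv _ := rfl
  map_mul' _ _ := rfl

end Compl

section TwoCopies

variable {V : Type*} {G : SimpleGraph V}

abbrev twoCopies (G : SimpleGraph V) : SimpleGraph (ZMod 2 × V) := ⊥ □ G

lemma twoCopies_adj {p q : ZMod 2 × V} :
    (twoCopies G).Adj p q ↔ p.1 = q.1 ∧ G.Adj p.2 q.2 := by
  simp [boxProd_adj, and_comm]

lemma twoCopies_reachable {p q : ZMod 2 × V} :
    (twoCopies G).Reachable p q ↔ p.1 = q.1 ∧ G.Reachable p.2 q.2 := by
  simp [reachable_boxProd]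

def twoCopiesAutHom :
    ((G ≃g G) × (G ≃g G)) ⋊[prodSwapHom _] Multiplicative (ZMod 2) →*
      (twoCopies G ≃g twoCopies G) where
  toFun g :=
    { toEquiv := Equiv.prodShear (Equiv.addLeft g.right.toAdd)
        fun i => (pairAt g.left (g.right.toAdd + i)).toEquiv
      map_rel_iff' := by
        rintro ⟨i, a⟩ ⟨j, b⟩
        simp only [twoCopies_adj, Equiv.prodShear_apply, Equiv.coe_addLeft, add_right_inj,
          and_congr_right_iff]
        rintro rfl
        exact (pairAt g.left _).map_adj_iff }
  map_one' := by
    ext ⟨i, v⟩ <;> simp [pairAt_one]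
  map_mul' := by
    rintro ⟨n, c⟩ ⟨m, c'⟩
    ext ⟨i, v⟩ <;> simp [pairAt_mul, pairAt_prodSwapHom, add_assoc, CharTwo.add_cancel_left]

lemma twoCopiesAutHom_apply
    (g : ((G ≃g G) × (G ≃g G)) ⋊[prodSwapHom _] Multiplicative (ZMod 2)) (p : ZMod 2 × V) :
    twoCopiesAutHom g p = (g.right.toAdd + p.1, pairAt g.left (g.right.toAdd + p.1) p.2) :=
  rfl

theorem twoCopiesAutHom_injective [Nonempty V] :
    Function.Injective (twoCopiesAutHom (G := G)) := by
  rintro ⟨n, c⟩ ⟨m, c'⟩ h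
  have happ (i : ZMod 2) (v : V) : c.toAdd + i = c'.toAdd + i ∧
      pairAt n (c.toAdd + i) v = pairAt m (c'.toAdd + i) v := by
    simpa only [twoCopiesAutHom_apply, Prod.mk.injEq] using DFunLike.congr_fun h (i, v)
  obtain ⟨v₀⟩ := ‹Nonempty V›
  obtain rfl : c = c' := by simpa using (happ 0 v₀).1
  have hpair (k : ZMod 2) : pairAt n k = pairAt m k := RelIso.ext fun v => by
    simpa [CharTwo.add_cancel_left] using (happ (c.toAdd + k) v).2
  exact SemidirectProduct.ext (Prod.ext (hpair 0) (hpair 1)) rfl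

theorem Connected.exists_fst_twoCopiesAut_eq_add (hG : G.Connected)
    (f : twoCopies G ≃g twoCopies G) : ∃ c : ZMod 2, ∀ p, (f p).1 = c + p.1 := by
  obtain ⟨v₀⟩ := hG.nonempty
  have hlayer (i : ZMod 2) (v : V) : (f (i, v)).1 = (f (i, v₀)).1 :=
    (twoCopies_reachable.mp <| f.reachable_iff.mpr <|
      twoCopies_reachable (p := (i, v)) (q := (i, v₀)) |>.mpr ⟨rfl, hG.preconnected v v₀⟩).1
  set c := (f (0, v₀)).1
  have hsep : (f (1, v₀)).1 ≠ c := by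
    intro hsame
    have hall : ∀ i v, (f (i, v)).1 = c :=
      Fin.forall_fin_two.2 ⟨hlayer 0, fun v => (hlayer 1 v).trans hsame⟩
    have := hall .. ▸ congrArg Prod.fst (f.apply_symm_apply (c + 1, v₀))
    simp at this
  refine ⟨c, fun ⟨i, v⟩ => (hlayer i v).trans ?_⟩
  revert i
  exact Fin.forall_fin_two.2 ⟨(add_zero c).symm, ZMod.eq_add_one_of_ne hsep⟩

def twoCopiesLayerIso (f : twoCopies G ≃g twoCopies G) {c : ZMod 2}
    (hc : ∀ p, (f p).1 = c + p.1) (i : ZMod 2) : G ≃g G where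
  toFun v := (f (i, v)).2
  invFun w := (f.symm (c + i, w)).2
  left_inv v := by
    have hfv : (c + i, (f (i, v)).2) = f (i, v) := Prod.ext (hc (i, v)).symm rfl
    simp [hfv]
  right_inv w := by
    set p := f.symm (c + i, w)
    have hp : f p = (c + i, w) := f.apply_symm_apply _
    have hi : (i, p.2) = p := Prod.ext (by simpa [hp] using hc p) rfl
    change (f (i, p.2)).2 = w
    rw [hi, hp]
  map_rel_iff' {a b} := by
    simpa [twoCopies_adj, hc] using f.map_adj_iff (v := (i, a)) (w := (i, b))

theorem twoCopiesAutHom_surjective (hG : G.Connected) :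
    Function.Surjective (twoCopiesAutHom (G := G)) := by
  intro f
  obtain ⟨c, hc⟩ := hG.exists_fst_twoCopiesAut_eq_add f
  let ψ := twoCopiesLayerIso f hc
  refine ⟨⟨(ψ (c + 0), ψ (c + 1)), .ofAdd c⟩, RelIso.ext fun ⟨i, v⟩ => ?_⟩
  rw [twoCopiesAutHom_apply]
  simp only [toAdd_ofAdd, pairAt_mk (fun k => ψ (c + k)), CharTwo.add_cancel_left]
  exact Prod.ext (hc (i, v)).symm rfl

noncomputable def autTwoCopiesEquiv (hG : G.Connected) :
    ((G ≃g G) × (G ≃g G)) ⋊[prodSwapHom _] Multiplicative (ZMod 2) ≃*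
      (twoCopies G ≃g twoCopies G) :=
  have := hG.nonempty
  .ofBijective twoCopiesAutHom ⟨twoCopiesAutHom_injective, twoCopiesAutHom_surjective hG⟩

end TwoCopies

abbrev zmodCycleGraph (n : ℕ) : SimpleGraph (ZMod n) := circulantGraph {1}

lemma zmodCycleGraph_four_connected : (zmodCycleGraph 4).Connected := by
  unfold zmodCycleGraph
  exact cycleGraph_eq_circulantGraph 3 ▸ cycleGraph_connected

end SimpleGraph

namespace DihedralGroup

variable {n : ℕ}

instance : MulAction (DihedralGroup n) (ZMod n) where
  smul
    | r i, j => i + j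
    | sr i, j => -i - j
  one_smul := zero_add
  mul_smul := by
    rintro (a | a) (b | b) x <;>
      simp only [HSMul.hSMul, SMul.smul, r_mul_r, r_mul_sr, sr_mul_r, sr_mul_sr] <;> ring

@[simp] lemma r_smul (i j : ZMod n) : r i • j = i + j := rfl

@[simp] lemma sr_smul (i j : ZMod n) : sr i • j = -i - j := rfl

def cycleAutHom : DihedralGroup n →* (zmodCycleGraph n ≃g zmodCycleGraph n) where
  toFun d := ⟨MulAction.toPerm d, by rcases d with i | i <;> simp [MulAction.toPerm, or_comm]⟩
  map_one' := by ext; simp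
  map_mul' _ _ := by ext; simp [mul_smul]

set_option maxRecDepth 10000 in
theorem cycleAutHom_bijective_four : Function.Bijective (cycleAutHom (n := 4)) := by
  constructor
  · intro d e h
    have key : ∀ d e : DihedralGroup 4, (∀ j : ZMod 4, d • j = e • j) → d = e := by decide
    exact key d e fun j => congr($h j)
  · intro f
    have key : ∀ φ : ZMod 4 → ZMod 4, (∀ a b, φ a = φ b → a = b) →
        (∀ a b, (zmodCycleGraph 4).Adj (φ a) (φ b) ↔ (zmodCycleGraph 4).Adj a b) →
        ∃ d : DihedralGroup 4, ∀ j, d • j = φ j := by decide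
    obtain ⟨d, hd⟩ := key f (fun _ _ => f.injective.eq_iff.mp) fun _ _ => f.map_adj_iff
    exact ⟨d, RelIso.ext hd⟩

end DihedralGroup

lemma genSet_three_s3 :
    genSet 3 = {![1, 0, 0], ![0, 1, 0], ![0, 0, 1], ![0, 1, 1], ![1, 1, 1]} := by
  ext x
  simp only [genSet, Set.mem_ofPred_eq, Set.mem_insert_iff, Set.mem_singleton_iff]
  constructor
  · rintro (⟨j, rfl⟩ | ⟨k, hk2, hk3, rfl⟩)
    · fin_cases j <;> decide
    · interval_cases k <;> decide
  · rintro (rfl | rfl | rfl | rfl | rfl)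
    exacts [.inl ⟨0, by decide⟩, .inl ⟨1, by decide⟩, .inl ⟨2, by decide⟩,
      .inr ⟨2, le_rfl, by decide, by decide⟩, .inr ⟨3, by decide, le_rfl, by decide⟩]

lemma compl_AQ_three_adj (x y : Fin 3 → ZMod 2) :
    (AQ 3)ᶜ.Adj x y ↔ x + y = ![1, 1, 0] ∨ x + y = ![1, 0, 1] := by
  simp only [compl_adj, AQ, genSet_three_s3]
  revert x y
  decide

-- Copy `i` is the coset `i • 100 + ⟨110, 101⟩`, run through in the order 000, 110, 011, 101.
def squaresLabel (p : ZMod 2 × ZMod 4) : Fin 3 → ZMod 2 :=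
  p.1 • ![1, 0, 0] +
    (![![0, 0, 0], ![1, 1, 0], ![0, 1, 1], ![1, 0, 1]] : ZMod 4 → Fin 3 → ZMod 2) p.2

noncomputable def twoCopiesCycleIsoComplAQ3 :
    twoCopies (zmodCycleGraph 4) ≃g (AQ 3)ᶜ where
  toEquiv := .ofBijective squaresLabel (by decide)
  map_rel_iff' {p q} := by
    have key : ∀ p q : ZMod 2 × ZMod 4,
        squaresLabel p + squaresLabel q = ![1, 1, 0] ∨
            squaresLabel p + squaresLabel q = ![1, 0, 1] ↔
          p.1 = q.1 ∧ (zmodCycleGraph 4).Adj p.2 q.2 := by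
      decide
    rw [compl_AQ_three_adj, twoCopies_adj]
    exact key p q

theorem aut_AQ3_iso_D8xD8_rtimes_C2 :
    Nonempty ((AQ 3 ≃g AQ 3) ≃* (D8 × D8) ⋊[swapφ] Multiplicative (ZMod 2)) :=
  ⟨autComplEquiv.trans <| twoCopiesCycleIsoComplAQ3.symm.autCongr.trans <|
    (autTwoCopiesEquiv zmodCycleGraph_four_connected).symm.trans <|
    -- `swapφ` unfolds to `prodSwapHom D8`
    prodSwapSemidirectCongr <|
      (MulEquiv.ofBijective _ DihedralGroup.cycleAutHom_bijective_four).symm⟩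
end

section
/- For every n ≥ 4, the augmented cube graph AQ_n is a normal Cayley graph: every graph automorphism g of AQ_n with g(0) = 0 is additive, i.e., g(x + y) = g(x) + g(y) for all x, y ∈ 𝔽₂ⁿ (and consequently g maps the generating set S_n onto itself). -/
/-!
An automorphism `g` of `AQ n` fixing `0` permutes `genSet n` (the neighbourhood of `0`) and
preserves the number of common neighbours of two vertices `x, y`, which only depends on `x + y`.
Among the generators, this number is `2` exactly for the `e_j` and for `v_n`. As `e_j` with
`j < n - 1` has the two `genSet`-neighbours `v_k, v_{k+1} = v_k + e_j` only, `g` is additive on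
these triangles, so the linear map `L` with `L e_j = g e_j` agrees with `g` on all of `genSet n`.
Then `L` is an automorphism of `AQ n` as well and `L⁻¹ ∘ g` fixes `0` and `genSet n` pointwise.
Such an automorphism `h` is the identity: if `x` of least Hamming weight had `h x ≠ x`, then every
`x + e_j` with `x_j = 1` is fixed, and comparing common-neighbour counts shows that each
`d + e_j`, where `d = x + h x`, is some `e_a` or `v_n`; for `n ≥ 4` this forces `d = x`, i.e.
`h x = 0 = h 0`.
-/

theorem SimpleGraph.Iso.image_commonNeighbors {V W : Type*} {G : SimpleGraph V}
    {G' : SimpleGraph W} (f : G ≃g G') (v w : V) :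
    f '' G.commonNeighbors v w = G'.commonNeighbors (f v) (f w) := by
  rw [SimpleGraph.commonNeighbors, Set.image_inter f.injective, f.image_neighborSet,
    f.image_neighborSet, SimpleGraph.commonNeighbors]

theorem SimpleGraph.Iso.ncard_commonNeighbors {V W : Type*} {G : SimpleGraph V}
    {G' : SimpleGraph W} (f : G ≃g G') (v w : V) :
    (G'.commonNeighbors (f v) (f w)).ncard = (G.commonNeighbors v w).ncard := by
  rw [← f.image_commonNeighbors, Set.ncard_image_of_injective _ f.injective]

namespace AQ

variable {n : ℕ}

theorem add_self (x : Fin n → ZMod 2) : x + x = 0 :=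
  funext fun i => CharTwo.add_self_eq_zero (x i)

theorem add_eq_zero_iff_eq {x y : Fin n → ZMod 2} : x + y = 0 ↔ x = y := by
  rw [add_eq_zero_iff_eq_neg, neg_eq_of_add_eq_zero_left (add_self y)]

theorem eq_one_of_ne_zero {a : ZMod 2} (h : a ≠ 0) : a = 1 := by
  revert a; decide

theorem stdBasis_eq_single (j : Fin n) : stdBasis n j = Pi.single j 1 := by
  funext i
  simp [stdBasis, Pi.single_apply]

theorem stdBasis_ne_zero (j : Fin n) : stdBasis n j ≠ 0 := by
  simp [stdBasis_eq_single]

theorem stdBasis_injective : Function.Injective (stdBasis n) := fun a b h => by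
  have := congrFun h a
  by_contra hab
  simp [stdBasis, hab] at this

theorem lastOnes_zero : lastOnes n 0 = 0 := by
  funext i
  simp [lastOnes]

theorem lastOnes_ne_zero {k : ℕ} (hk : 1 ≤ k) (hkn : k ≤ n) : lastOnes n k ≠ 0 := by
  intro h
  have := congrFun h ⟨n - 1, by omega⟩
  simp [lastOnes, show n - k ≤ n - 1 by omega] at this

theorem lastOnes_succ {j : Fin n} {k : ℕ} (hjk : j.val + k + 1 = n) :
    lastOnes n (k + 1) = stdBasis n j + lastOnes n k := by
  funext i
  simp only [lastOnes, stdBasis, Pi.add_apply, Fin.ext_iff]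
  by_cases h₁ : i.val = j.val
  · simp [h₁, show n - (k + 1) ≤ j.val by omega, show ¬ n - k ≤ j.val by omega]
  · by_cases h₂ : n - k ≤ i.val
    · simp [h₁, h₂, show n - (k + 1) ≤ i.val by omega]
    · simp [h₁, h₂, show ¬ n - (k + 1) ≤ i.val by omega]

theorem lastOnes_succ_ne {k : ℕ} (hk : k < n) : lastOnes n (k + 1) ≠ lastOnes n k := by
  rw [lastOnes_succ (j := ⟨n - 1 - k, by omega⟩) (by simp only; omega), ne_eq, add_eq_right]
  exact stdBasis_ne_zero _

theorem lastOnes_one (hn : 1 ≤ n) : lastOnes n 1 = stdBasis n ⟨n - 1, by omega⟩ := by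
  rw [lastOnes_succ (j := ⟨n - 1, by omega⟩) (by simp; omega), lastOnes_zero, add_zero]

theorem stdBasis_mem_genSet (j : Fin n) : stdBasis n j ∈ genSet n := Or.inl ⟨j, rfl⟩

theorem lastOnes_mem_genSet {k : ℕ} (hk : 1 ≤ k) (hkn : k ≤ n) : lastOnes n k ∈ genSet n := by
  obtain rfl | hk2 := eq_or_lt_of_le hk
  · rw [lastOnes_one (by omega)]
    exact stdBasis_mem_genSet _
  · exact Or.inr ⟨k, hk2, hkn, rfl⟩

theorem zero_not_mem_genSet : (0 : Fin n → ZMod 2) ∉ genSet n := by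
  rintro (⟨j, hj⟩ | ⟨k, hk2, hkn, hk⟩)
  · exact stdBasis_ne_zero j hj.symm
  · exact lastOnes_ne_zero (by omega) hkn hk.symm

theorem lastOnes_ne_stdBasis {k : ℕ} (hk2 : 2 ≤ k) (hkn : k ≤ n) (j : Fin n) :
    lastOnes n k ≠ stdBasis n j := by
  intro h
  have h₁ := congrFun h ⟨n - 1, by omega⟩
  have h₂ := congrFun h ⟨n - 2, by omega⟩
  simp only [lastOnes, stdBasis, Fin.ext_iff, show n - k ≤ n - 1 by omega,
    show n - k ≤ n - 2 by omega, if_true] at h₁ h₂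
  split_ifs at h₁ h₂ <;> first | omega | exact one_ne_zero ‹_›

/-- Vectors described by a predicate on the coordinate index: identities between sums of
generators become pointwise equivalences of predicates, which `omega` decides once they are
instantiated at the finitely many relevant coordinates. -/
noncomputable def indVec (n : ℕ) (P : ℕ → Prop) : Fin n → ZMod 2 :=
  open Classical in fun i => if P i.val then 1 else 0

theorem indVec_eq_indVec_iff {P Q : ℕ → Prop} :
    indVec n P = indVec n Q ↔ ∀ t < n, (P t ↔ Q t) := by
  classical
  constructor
  · intro h t ht
    have := congrFun h ⟨t, ht⟩
    simp only [indVec] at this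
    split_ifs at this with hP hQ hQ <;> simp_all
  · intro h
    funext i
    simp only [indVec, h i.val i.isLt]

theorem indVec_add_indVec (P Q : ℕ → Prop) :
    indVec n P + indVec n Q = indVec n (fun t => ¬(P t ↔ Q t)) := by
  classical
  funext i
  simp only [indVec, Pi.add_apply]
  by_cases hP : P i.val <;> by_cases hQ : Q i.val <;> simp [hP, hQ, CharTwo.add_self_eq_zero]

theorem stdBasis_eq_indVec (j : Fin n) : stdBasis n j = indVec n (· = j.val) := by
  classical
  funext i
  simp [stdBasis, indVec, Fin.ext_iff]

theorem lastOnes_eq_indVec (k : ℕ) : lastOnes n k = indVec n (n - k ≤ ·) := by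
  classical
  funext i
  simp [lastOnes, indVec]

theorem exists_of_indVec_mem_genSet {P : ℕ → Prop} (h : indVec n P ∈ genSet n) :
    (∃ j < n, ∀ t < n, (P t ↔ t = j)) ∨ ∃ k, 2 ≤ k ∧ k ≤ n ∧ ∀ t < n, (P t ↔ n - k ≤ t) := by
  rcases h with ⟨j, hj⟩ | ⟨k, hk2, hkn, hk⟩
  · rw [stdBasis_eq_indVec, indVec_eq_indVec_iff] at hj
    exact Or.inl ⟨j.val, j.isLt, hj⟩
  · rw [lastOnes_eq_indVec, indVec_eq_indVec_iff] at hk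
    exact Or.inr ⟨k, hk2, hkn, hk⟩

theorem eq_of_stdBasis_add_stdBasis_mem_genSet {a b : Fin n} (hab : a ≠ b)
    (h : stdBasis n a + stdBasis n b ∈ genSet n) :
    (a.val = n - 2 ∧ b.val = n - 1) ∨ (a.val = n - 1 ∧ b.val = n - 2) := by
  have hab' : a.val ≠ b.val := Fin.val_ne_of_ne hab
  rw [stdBasis_eq_indVec, stdBasis_eq_indVec, indVec_add_indVec] at h
  rcases exists_of_indVec_mem_genSet h with ⟨j, -, H⟩ | ⟨k, -, -, H⟩
  · have := H a a.isLt
    have := H b b.isLt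
    omega
  · have := H a a.isLt
    have := H b b.isLt
    have := H (n - 1) (by omega)
    have := H (n - 2) (by omega)
    omega

theorem eq_of_stdBasis_add_lastOnes_mem_genSet {a : Fin n} {k : ℕ} (hk2 : 2 ≤ k) (hkn : k ≤ n)
    (h : stdBasis n a + lastOnes n k ∈ genSet n) :
    a.val + k = n - 1 ∨ a.val + k = n ∨ (k = 2 ∧ a.val = n - 1) := by
  have ha := a.isLt
  rw [stdBasis_eq_indVec, lastOnes_eq_indVec, indVec_add_indVec] at h
  rcases exists_of_indVec_mem_genSet h with ⟨j, -, H⟩ | ⟨l, -, -, H⟩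
  · have := H a ha
    have := H (n - 1) (by omega)
    have := H (n - 2) (by omega)
    have := H (n - k) (by omega)
    have := H (n - 3) (by omega)
    omega
  · have := H a ha
    have := H (n - 1) (by omega)
    have := H (n - k) (by omega)
    have := H (n - k - 1) (by omega)
    have := H (n - l) (by omega)
    omega

theorem adj_iff {x y : Fin n → ZMod 2} : (AQ n).Adj x y ↔ x + y ∈ genSet n := by
  refine ⟨And.right, fun h => ⟨?_, h⟩⟩
  rintro rfl
  exact zero_not_mem_genSet (add_self x ▸ h)

theorem neighborSet_zero : (AQ n).neighborSet 0 = genSet n := by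
  ext s
  simp [adj_iff]

theorem mem_commonNeighbors_zero {d s : Fin n → ZMod 2} :
    s ∈ (AQ n).commonNeighbors 0 d ↔ s ∈ genSet n ∧ d + s ∈ genSet n := by
  simp [SimpleGraph.mem_commonNeighbors, adj_iff]

def translate (x : Fin n → ZMod 2) : AQ n ≃g AQ n where
  toEquiv := Equiv.addLeft x
  map_rel_iff' {a b} := by
    simp only [Equiv.coe_addLeft, adj_iff]
    rw [add_add_add_comm, add_self, zero_add]

theorem ncard_commonNeighbors (x y : Fin n → ZMod 2) :
    ((AQ n).commonNeighbors x y).ncard = ((AQ n).commonNeighbors 0 (x + y)).ncard := by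
  have h := (translate x).ncard_commonNeighbors 0 (x + y)
  simp only [translate, RelIso.coe_fn_mk, Equiv.coe_addLeft, add_zero, ← add_assoc, add_self,
    zero_add] at h
  exact h

theorem image_genSet {g : AQ n ≃g AQ n} (hg : g 0 = 0) : g '' genSet n = genSet n := by
  rw [← neighborSet_zero, g.image_neighborSet, hg]

theorem commonNeighbors_zero_eq_pair {a b : Fin n → ZMod 2} (ha : a ≠ 0)
    (h2 : ((AQ n).commonNeighbors 0 a).ncard = 2) (hb : b ∈ (AQ n).commonNeighbors 0 a) :
    (AQ n).commonNeighbors 0 a = {b, a + b} := by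
  have hab : b ≠ a + b := fun h => ha (by simpa using congrArg (· + b) h.symm)
  have hb' := mem_commonNeighbors_zero.1 hb
  have hsub : {b, a + b} ⊆ (AQ n).commonNeighbors 0 a := by
    rintro s (rfl | rfl)
    · exact hb
    · rw [mem_commonNeighbors_zero, ← add_assoc, add_self, zero_add]
      exact hb'.symm
  exact (Set.eq_of_subset_of_ncard_le hsub (by rw [h2, Set.ncard_pair hab])).symm

theorem commonNeighbors_zero_stdBasis_last (hn : 2 ≤ n) {j : Fin n} (hj : j.val + 1 = n) :
    (AQ n).commonNeighbors 0 (stdBasis n j) =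
      {stdBasis n ⟨n - 2, by omega⟩, lastOnes n 2} := by
  ext s
  rw [mem_commonNeighbors_zero]
  constructor
  · rintro ⟨⟨b, rfl⟩ | ⟨k, hk2, hkn, rfl⟩, hsum⟩
    · have hb : j ≠ b := by
        rintro rfl
        exact zero_not_mem_genSet (add_self _ ▸ hsum)
      have := eq_of_stdBasis_add_stdBasis_mem_genSet hb hsum
      exact Or.inl (congrArg _ (Fin.ext (by simp only; omega)))
    · have := eq_of_stdBasis_add_lastOnes_mem_genSet hk2 hkn hsum
      obtain rfl : k = 2 := by omega
      exact Or.inr rfl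
  · have hsum : stdBasis n j + stdBasis n ⟨n - 2, by omega⟩ = lastOnes n 2 := by
      rw [stdBasis_eq_indVec, stdBasis_eq_indVec, lastOnes_eq_indVec, indVec_add_indVec,
        indVec_eq_indVec_iff]
      intro t ht
      simp only
      omega
    rintro (rfl | rfl)
    · exact ⟨stdBasis_mem_genSet _, hsum ▸ lastOnes_mem_genSet (by omega) hn⟩
    · refine ⟨lastOnes_mem_genSet (by omega) hn, ?_⟩
      rw [← hsum, ← add_assoc, add_self, zero_add]
      exact stdBasis_mem_genSet _

theorem commonNeighbors_zero_stdBasis_of_lt {j : Fin n} (hj : j.val + 1 < n) :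
    (AQ n).commonNeighbors 0 (stdBasis n j) = {lastOnes n (n - 1 - j), lastOnes n (n - j)} := by
  have hsucc : lastOnes n (n - j) = stdBasis n j + lastOnes n (n - 1 - j) := by
    rw [← lastOnes_succ (by omega), show n - 1 - j + 1 = n - j by omega]
  ext s
  rw [mem_commonNeighbors_zero]
  constructor
  · rintro ⟨⟨b, rfl⟩ | ⟨k, hk2, hkn, rfl⟩, hsum⟩
    · have hb : j ≠ b := by
        rintro rfl
        exact zero_not_mem_genSet (add_self _ ▸ hsum)
      have := eq_of_stdBasis_add_stdBasis_mem_genSet hb hsum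
      refine Or.inl ?_
      rw [stdBasis_eq_indVec, lastOnes_eq_indVec, indVec_eq_indVec_iff]
      intro t ht
      omega
    · have := eq_of_stdBasis_add_lastOnes_mem_genSet hk2 hkn hsum
      obtain h | h : k = n - 1 - j ∨ k = n - j := by omega
      · exact Or.inl (h ▸ rfl)
      · exact Or.inr (h ▸ rfl)
  · rintro (rfl | rfl)
    · exact ⟨lastOnes_mem_genSet (by omega) (by omega),
        hsucc ▸ lastOnes_mem_genSet (by omega) (by omega)⟩
    · refine ⟨lastOnes_mem_genSet (by omega) (by omega), ?_⟩
      rw [hsucc, ← add_assoc, add_self, zero_add]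
      exact lastOnes_mem_genSet (by omega) (by omega)

theorem ncard_commonNeighbors_zero_stdBasis (hn : 2 ≤ n) (j : Fin n) :
    ((AQ n).commonNeighbors 0 (stdBasis n j)).ncard = 2 := by
  by_cases hj : j.val + 1 < n
  · rw [commonNeighbors_zero_stdBasis_of_lt hj, Set.ncard_pair]
    rw [show n - j = n - 1 - j + 1 by omega]
    exact (lastOnes_succ_ne (by omega)).symm
  · rw [commonNeighbors_zero_stdBasis_last hn (by omega), Set.ncard_pair]
    exact (lastOnes_ne_stdBasis le_rfl hn _).symm

theorem two_lt_ncard_commonNeighbors_zero_lastOnes {k : ℕ} (hk2 : 2 ≤ k) (hkn : k < n) :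
    2 < ((AQ n).commonNeighbors 0 (lastOnes n k)).ncard := by
  set e₁ := stdBasis n ⟨n - 1 - k, by omega⟩
  set e₂ := stdBasis n ⟨n - k, by omega⟩
  have h₁ : lastOnes n (k + 1) = e₁ + lastOnes n k := lastOnes_succ (by simp only; omega)
  have h₂ : lastOnes n k = e₂ + lastOnes n (k - 1) := by
    rw [← lastOnes_succ (by simp only; omega), Nat.sub_add_cancel (by omega)]
  have hsub : {lastOnes n (k + 1), e₁, e₂} ⊆ (AQ n).commonNeighbors 0 (lastOnes n k) := by
    rintro s (rfl | rfl | rfl) <;> rw [mem_commonNeighbors_zero]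
    · refine ⟨lastOnes_mem_genSet (by omega) hkn, ?_⟩
      rw [h₁, add_left_comm, add_self, add_zero]
      exact stdBasis_mem_genSet _
    · exact ⟨stdBasis_mem_genSet _, add_comm e₁ _ ▸ h₁ ▸ lastOnes_mem_genSet (by omega) hkn⟩
    · refine ⟨stdBasis_mem_genSet _, ?_⟩
      rw [h₂, add_comm, ← add_assoc, add_self, zero_add]
      exact lastOnes_mem_genSet (by omega) (by omega)
  have h₁₂ : e₁ ≠ e₂ := fun h => by
    have := congrArg Fin.val (stdBasis_injective h)
    simp only at this
    omega
  calc 2 < ({lastOnes n (k + 1), e₁, e₂} : Set _).ncard := by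
        rw [Set.ncard_eq_three.2 ⟨_, _, _, lastOnes_ne_stdBasis (by omega) hkn _,
          lastOnes_ne_stdBasis (by omega) hkn _, h₁₂, rfl⟩]
        norm_num
    _ ≤ _ := Set.ncard_le_ncard hsub

theorem eq_stdBasis_or_eq_lastOnes_of_ncard_eq_two {s : Fin n → ZMod 2} (hs : s ∈ genSet n)
    (h2 : ((AQ n).commonNeighbors 0 s).ncard = 2) : (∃ a, s = stdBasis n a) ∨ s = lastOnes n n := by
  rcases hs with hs | ⟨k, hk2, hkn, rfl⟩
  · exact Or.inl hs
  · obtain hkn | rfl := lt_or_eq_of_le hkn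
    · exact absurd h2 (two_lt_ncard_commonNeighbors_zero_lastOnes hk2 hkn).ne'
    · exact Or.inr rfl

theorem hammingNorm_add_stdBasis_lt {x : Fin n → ZMod 2} {j : Fin n} (hj : x j ≠ 0) :
    hammingNorm (x + stdBasis n j) < hammingNorm x := by
  have hx : x j = 1 := eq_one_of_ne_zero hj
  refine Finset.card_lt_card (Finset.ssubset_iff_of_subset
    (Finset.monotone_filter_right _ fun i => ?_) |>.2 ⟨j, ?_, ?_⟩) <;>
    simp only [Finset.mem_filter, Finset.mem_univ, true_and, Pi.add_apply]
  · by_cases hij : i = j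
    · simp [hij, hx, stdBasis]
    · simp [hij, stdBasis]
  · exact hj
  · simp [stdBasis, hx, CharTwo.add_self_eq_zero]

theorem exists_ne_of_ne_stdBasis {x : Fin n → ZMod 2} (hx0 : x ≠ 0)
    (hx : ∀ j, x ≠ stdBasis n j) : ∃ j₁ j₂, j₁ ≠ j₂ ∧ x j₁ ≠ 0 ∧ x j₂ ≠ 0 := by
  obtain ⟨j₁, h₁⟩ := Function.ne_iff.1 hx0
  obtain ⟨j₂, h₂⟩ := Function.ne_iff.1 (hx j₁)
  have hj : j₁ ≠ j₂ := by
    rintro rfl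
    simp [stdBasis, eq_one_of_ne_zero h₁] at h₂
  exact ⟨j₁, j₂, hj, h₁, by simpa [stdBasis, Ne.symm hj] using h₂⟩

theorem stdBasis_add_stdBasis_ne_lastOnes_add_stdBasis (hn : 4 ≤ n) (a i j : Fin n) :
    stdBasis n a + stdBasis n i ≠ lastOnes n n + stdBasis n j := by
  rw [stdBasis_eq_indVec, stdBasis_eq_indVec, stdBasis_eq_indVec, lastOnes_eq_indVec,
    indVec_add_indVec, indVec_add_indVec, Ne, indVec_eq_indVec_iff]
  intro H
  have := H 0 (by omega)
  have := H 1 (by omega)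
  have := H 2 (by omega)
  have := H 3 (by omega)
  omega

theorem eq_stdBasis_add_stdBasis (hn : 4 ≤ n) {d : Fin n → ZMod 2} (hd : d ≠ 0) {i j : Fin n}
    (hij : i ≠ j)
    (hi : (∃ a, d + stdBasis n i = stdBasis n a) ∨ d + stdBasis n i = lastOnes n n)
    (hj : (∃ b, d + stdBasis n j = stdBasis n b) ∨ d + stdBasis n j = lastOnes n n) :
    d = stdBasis n i + stdBasis n j := by
  have eq_add : ∀ {y : Fin n → ZMod 2} {k : Fin n}, d + stdBasis n k = y → d = y + stdBasis n k :=
    fun h => by rw [← h, add_assoc, add_self, add_zero]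
  rcases hi with ⟨a, ha⟩ | hi <;> rcases hj with ⟨b, hb⟩ | hj
  · have hai : a.val ≠ i.val := fun h => hd (by rw [eq_add ha, Fin.ext h, add_self])
    have H := (eq_add ha).symm.trans (eq_add hb)
    rw [eq_add ha]
    simp only [stdBasis_eq_indVec, indVec_add_indVec, indVec_eq_indVec_iff] at H ⊢
    have hij' := Fin.val_ne_of_ne hij
    intro t ht
    have := H t ht
    have := H a a.isLt
    have := H b b.isLt
    have := H i i.isLt
    have := H j j.isLt
    omega
  · exact absurd ((eq_add ha).symm.trans (eq_add hj))
      (stdBasis_add_stdBasis_ne_lastOnes_add_stdBasis hn a i j)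
  · exact absurd ((eq_add hb).symm.trans (eq_add hi))
      (stdBasis_add_stdBasis_ne_lastOnes_add_stdBasis hn b j i)
  · exact absurd (stdBasis_injective (add_left_cancel ((eq_add hi).symm.trans (eq_add hj)))) hij

theorem eq_of_forall_add_stdBasis (hn : 4 ≤ n) {x d : Fin n → ZMod 2} (hd : d ≠ 0)
    {j₁ j₂ : Fin n} (hj : j₁ ≠ j₂) (h₁ : x j₁ ≠ 0) (h₂ : x j₂ ≠ 0)
    (H : ∀ j, x j ≠ 0 →
      (∃ a, d + stdBasis n j = stdBasis n a) ∨ d + stdBasis n j = lastOnes n n) :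
    x = d := by
  have hd₁₂ := eq_stdBasis_add_stdBasis hn hd hj (H j₁ h₁) (H j₂ h₂)
  have hsupp : ∀ i, i ≠ j₁ → i ≠ j₂ → x i = 0 := by
    intro i hi₁ hi₂
    by_contra hi
    have hd₁ := eq_stdBasis_add_stdBasis hn hd hi₁.symm (H j₁ h₁) (H i hi)
    exact hi₂ (stdBasis_injective (add_left_cancel (hd₁.symm.trans hd₁₂)))
  funext i
  rw [hd₁₂]
  by_cases hi₁ : i = j₁
  · subst hi₁
    simp [stdBasis, hj, eq_one_of_ne_zero h₁]
  by_cases hi₂ : i = j₂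
  · subst hi₂
    simp [stdBasis, Ne.symm hj, eq_one_of_ne_zero h₂]
  simp [stdBasis, hi₁, hi₂, hsupp i hi₁ hi₂]

theorem eq_stdBasis_or_eq_lastOnes_of_apply_add_stdBasis (hn : 2 ≤ n) {h : AQ n ≃g AQ n}
    {x : Fin n → ZMod 2} {j : Fin n} (hf : h (x + stdBasis n j) = x + stdBasis n j) :
    (∃ a, x + h x + stdBasis n j = stdBasis n a) ∨ x + h x + stdBasis n j = lastOnes n n := by
  have hsum : h x + (x + stdBasis n j) = x + h x + stdBasis n j := by abel
  have hadj : (AQ n).Adj (h x) (x + stdBasis n j) := by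
    rw [← hf, h.map_adj_iff, adj_iff, ← add_assoc, add_self, zero_add]
    exact stdBasis_mem_genSet j
  refine eq_stdBasis_or_eq_lastOnes_of_ncard_eq_two (hsum ▸ adj_iff.1 hadj) ?_
  rw [← hsum, ← ncard_commonNeighbors, ← hf, h.ncard_commonNeighbors, ncard_commonNeighbors,
    ← add_assoc, add_self, zero_add, ncard_commonNeighbors_zero_stdBasis hn]

theorem eq_self_of_forall_genSet (hn : 4 ≤ n) {h : AQ n ≃g AQ n} (h0 : h 0 = 0)
    (hS : ∀ s ∈ genSet n, h s = s) (x : Fin n → ZMod 2) : h x = x := by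
  induction hw : hammingNorm x using Nat.strong_induction_on generalizing x with
  | _ w ih =>
    by_contra hx
    have hx0 : x ≠ 0 := by
      rintro rfl
      exact hx h0
    obtain ⟨j₁, j₂, hj, h₁, h₂⟩ :=
      exists_ne_of_ne_stdBasis hx0 fun j hxj => hx (hxj ▸ hS _ (stdBasis_mem_genSet j))
    have hd : x + h x ≠ 0 := fun h' => hx (add_eq_zero_iff_eq.1 h').symm
    have hxd := eq_of_forall_add_stdBasis hn hd hj h₁ h₂ fun j hj =>
      eq_stdBasis_or_eq_lastOnes_of_apply_add_stdBasis (by omega)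
        (ih _ (hw ▸ hammingNorm_add_stdBasis_lt hj) _ rfl)
    refine hx0 (h.injective ?_)
    rw [h0]
    simpa using congrArg (x + ·) hxd

theorem ext_of_eqOn_genSet (hn : 4 ≤ n) {g₁ g₂ : AQ n ≃g AQ n} (h0 : g₁ 0 = g₂ 0)
    (hS : Set.EqOn g₁ g₂ (genSet n)) : g₁ = g₂ := by
  have hfix := eq_self_of_forall_genSet hn (h := g₁.trans g₂.symm) (by simp [h0])
    fun s hs => by simp [hS hs]
  exact RelIso.ext fun x => by simpa [RelIso.symm_apply_eq] using hfix x

/-- `v_k` and `v_{k+1} = e_j + v_k` are the only two `genSet`-neighbours of `e_j`; since `g`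
preserves common-neighbour counts, `g e_j` also has just two, `g v_k` and `g e_j + g v_k`. -/
theorem map_lastOnes_succ (hn : 2 ≤ n) {g : AQ n ≃g AQ n} (hg : g 0 = 0) {j : Fin n} {k : ℕ}
    (hk : 1 ≤ k) (hjk : j.val + k + 1 = n) :
    g (lastOnes n (k + 1)) = g (stdBasis n j) + g (lastOnes n k) := by
  have hv := lastOnes_succ hjk
  have hmap : ∀ u ∈ (AQ n).commonNeighbors 0 (stdBasis n j),
      g u ∈ (AQ n).commonNeighbors 0 (g (stdBasis n j)) := fun u hu => by
    rw [← hg, ← g.image_commonNeighbors]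
    exact Set.mem_image_of_mem g hu
  have hk_mem : lastOnes n k ∈ (AQ n).commonNeighbors 0 (stdBasis n j) :=
    mem_commonNeighbors_zero.2
      ⟨lastOnes_mem_genSet hk (by omega), hv ▸ lastOnes_mem_genSet (by omega) (by omega)⟩
  have hk_mem' : lastOnes n (k + 1) ∈ (AQ n).commonNeighbors 0 (stdBasis n j) := by
    refine mem_commonNeighbors_zero.2 ⟨lastOnes_mem_genSet (by omega) (by omega), ?_⟩
    rw [hv, ← add_assoc, add_self, zero_add]
    exact lastOnes_mem_genSet hk (by omega)
  have h2 : ((AQ n).commonNeighbors 0 (g (stdBasis n j))).ncard = 2 := by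
    rw [← hg, g.ncard_commonNeighbors, ncard_commonNeighbors_zero_stdBasis hn]
  have hne : g (stdBasis n j) ≠ 0 := hg ▸ g.injective.ne (stdBasis_ne_zero j)
  have := hmap _ hk_mem'
  rw [commonNeighbors_zero_eq_pair hne h2 (hmap _ hk_mem)] at this
  exact this.resolve_left (g.injective.ne (lastOnes_succ_ne (by omega)))

theorem eqOn_genSet_of_eq_stdBasis (hn : 2 ≤ n) {g : AQ n ≃g AQ n} (hg : g 0 = 0)
    (f : (Fin n → ZMod 2) →+ (Fin n → ZMod 2)) (hf : ∀ j, f (stdBasis n j) = g (stdBasis n j)) :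
    Set.EqOn f g (genSet n) := by
  have hv : ∀ k, 1 ≤ k → k ≤ n → f (lastOnes n k) = g (lastOnes n k) := by
    intro k
    induction k with
    | zero => omega
    | succ k ih =>
      intro _ hkn
      obtain rfl | hk := Nat.eq_zero_or_pos k
      · rw [lastOnes_one (by omega)]
        exact hf _
      · have hjk : (⟨n - 1 - k, by omega⟩ : Fin n).val + k + 1 = n := by simp only; omega
        rw [map_lastOnes_succ hn hg hk hjk, lastOnes_succ hjk, map_add, hf, ih hk (by omega)]
  rintro s (⟨j, rfl⟩ | ⟨k, hk2, hkn, rfl⟩)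
  · exact hf j
  · exact hv k (by omega) hkn

theorem exists_addEquiv_eqOn_genSet (hn : 2 ≤ n) {g : AQ n ≃g AQ n} (hg : g 0 = 0) :
    ∃ L : (Fin n → ZMod 2) ≃+ (Fin n → ZMod 2),
      (∀ x, L x ∈ genSet n ↔ x ∈ genSet n) ∧ Set.EqOn L g (genSet n) := by
  let b := Pi.basisFun (ZMod 2) (Fin n)
  let L := b.constr (M' := Fin n → ZMod 2) (ZMod 2) fun j => g (stdBasis n j)
  have hLg : Set.EqOn L g (genSet n) := eqOn_genSet_of_eq_stdBasis hn hg L.toAddMonoidHom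
    fun j => by simp [L, b, stdBasis_eq_single]
  have hsurj : Function.Surjective L := by
    refine LinearMap.range_eq_top.1 (eq_top_iff.2 (b.span_eq.ge.trans (Submodule.span_le.2 ?_)))
    rintro _ ⟨j, rfl⟩
    obtain ⟨s, hs, hgs⟩ := (image_genSet hg).ge (stdBasis_mem_genSet j)
    exact ⟨s, by rw [hLg hs, hgs, Pi.basisFun_apply, stdBasis_eq_single]⟩
  have hinj := Finite.injective_iff_surjective.2 hsurj
  refine ⟨(LinearEquiv.ofBijective L ⟨hinj, hsurj⟩).toAddEquiv, fun x => ⟨fun hx => ?_,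
    fun hx => ?_⟩, hLg⟩
  · obtain ⟨s, hs, hgs⟩ := (image_genSet hg).ge hx
    have : L s = L x := (hLg hs).trans hgs
    exact hinj this ▸ hs
  · exact (hLg hx ▸ (image_genSet hg).le (Set.mem_image_of_mem g hx))

def ofAddEquiv (L : (Fin n → ZMod 2) ≃+ (Fin n → ZMod 2))
    (hL : ∀ x, L x ∈ genSet n ↔ x ∈ genSet n) : AQ n ≃g AQ n where
  toEquiv := L.toEquiv
  map_rel_iff' {x y} := by
    simp only [AddEquiv.toEquiv_eq_coe, EquivLike.coe_coe, adj_iff, ← map_add, hL]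

@[simp]
theorem ofAddEquiv_apply (L : (Fin n → ZMod 2) ≃+ (Fin n → ZMod 2))
    (hL : ∀ x, L x ∈ genSet n ↔ x ∈ genSet n) (x : Fin n → ZMod 2) : ofAddEquiv L hL x = L x :=
  rfl

end AQ

/-- For `n ≥ 4`, `AQ_n` is a normal Cayley graph: every automorphism fixing the
zero vertex is additive (and consequently maps `S_n` onto itself). -/
theorem AQn_normal (n : ℕ) (hn : 4 ≤ n) (g : AQ n ≃g AQ n) (hg : g 0 = 0) :
    (∀ x y : Fin n → ZMod 2, g (x + y) = g x + g y) ∧ ⇑g '' genSet n = genSet n := by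
  obtain ⟨L, hLS, hLg⟩ := AQ.exists_addEquiv_eqOn_genSet (by omega) hg
  have hgL : g = AQ.ofAddEquiv L hLS :=
    AQ.ext_of_eqOn_genSet hn (by simp [hg]) fun s hs => by simp [hLg hs]
  refine ⟨fun x y => ?_, AQ.image_genSet hg⟩
  simp [hgL]
end

section
/- If an automorphism g of the augmented cube graph AQ_4 maps each of the four cosets of U = {0000, 0010, 0001, 0011} onto itself and maps each of the four cosets of L = {0000, 1000, 0111, 1111} onto itself, then g is the identity. In other words, Aut(AQ_4) acts faithfully on these eight 4-cliques. -/
/-- The subgroup (upper clique) `U = {0000, 0010, 0001, 0011}` of `𝔽₂⁴`. -/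
def U : Set (Fin 4 → ZMod 2) := {![0,0,0,0], ![0,0,1,0], ![0,0,0,1], ![0,0,1,1]}

/-- The subgroup (lower clique) `L = {0000, 1000, 0111, 1111}` of `𝔽₂⁴`. -/
def L : Set (Fin 4 → ZMod 2) := {![0,0,0,0], ![1,0,0,0], ![0,1,1,1], ![1,1,1,1]}

/-- The subgroup (middle clique) `M = {0000, 0100, 0011, 0111}` of `𝔽₂⁴`. -/
def M : Set (Fin 4 → ZMod 2) := {![0,0,0,0], ![0,1,0,0], ![0,0,1,1], ![0,1,1,1]}

/-- The coset `K + z`. -/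
def coset (K : Set (Fin 4 → ZMod 2)) (z : Fin 4 → ZMod 2) : Set (Fin 4 → ZMod 2) :=
  (fun x => x + z) '' K

/-!
An automorphism fixing every coset of `U` and of `L` sends `z` into `(U + z) ∩ (L + z)`,
which is `{z}` because `U ∩ L = {0}`.
-/

section Coset

variable {K K' : Set (Fin 4 → ZMod 2)}

theorem mem_coset_self (hK : 0 ∈ K) (z : Fin 4 → ZMod 2) : z ∈ coset K z :=
  ⟨0, hK, zero_add z⟩

theorem coset_inter_coset_subset (hKK' : K ∩ K' ⊆ {0}) (z : Fin 4 → ZMod 2) :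
    coset K z ∩ coset K' z ⊆ {z} := by
  rintro _ ⟨⟨k, hk, rfl⟩, ⟨k', hk', hkk'⟩⟩
  obtain rfl : k' = k := add_right_cancel hkk'
  rw [hKK' ⟨hk, hk'⟩]
  exact zero_add z

theorem apply_eq_self_of_image_coset_eq (f : (Fin 4 → ZMod 2) → Fin 4 → ZMod 2)
    (hK0 : 0 ∈ K) (hK'0 : 0 ∈ K') (hKK' : K ∩ K' ⊆ {0})
    (hK : ∀ z, f '' coset K z = coset K z) (hK' : ∀ z, f '' coset K' z = coset K' z)
    (z : Fin 4 → ZMod 2) : f z = z :=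
  coset_inter_coset_subset hKK' z
    ⟨hK z ▸ Set.mem_image_of_mem f (mem_coset_self hK0 z),
      hK' z ▸ Set.mem_image_of_mem f (mem_coset_self hK'0 z)⟩

end Coset

theorem zero_mem_U : 0 ∈ U := Or.inl (by decide)

theorem zero_mem_L : 0 ∈ L := Or.inl (by decide)

theorem U_inter_L_subset : U ∩ L ⊆ {0} := by
  rintro x ⟨hU, hL⟩
  simp only [U, L, Set.mem_insert_iff, Set.mem_singleton_iff] at hU hL ⊢
  rcases hU with rfl | rfl | rfl | rfl <;> revert hL <;> decide

/-- If an automorphism of `AQ_4` maps each coset of `U` onto itself and each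
coset of `L` onto itself, it is the identity: `Aut(AQ_4)` acts faithfully on
these eight 4-cliques. -/
theorem AQ4_faithful_on_cliques (g : AQ 4 ≃g AQ 4)
    (hU : ∀ z : Fin 4 → ZMod 2, ⇑g '' coset U z = coset U z)
    (hL : ∀ z : Fin 4 → ZMod 2, ⇑g '' coset L z = coset L z) :
    g = 1 :=
  RelIso.ext (apply_eq_self_of_image_coset_eq g zero_mem_U zero_mem_L U_inter_L_subset hU hL)
end

section
/- For every automorphism g of the augmented cube graph AQ_4, either the image under g of every coset of U = {0000, 0010, 0001, 0011} is again a coset of U, or the image under g of every coset of U is a coset of L = {0000, 1000, 0111, 1111}. In particular, the set of four cosets of U is a block for the action of Aut(AQ_4) on the eight 4-cliques formed by the cosets of U and of L. -/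
/-! Every coset `z + U` is a 4-clique, and `z + 1000` is adjacent to `z` but to no other vertex
of it. Translations are automorphisms, so after recentring an automorphism `g` to fix `0` the
image of `U` is a 4-clique through `0` with such a pendant vertex, and a finite check shows that
only `U` and `L` qualify. Hence each `g '' (z + U)` is a coset of `U` or of `L`. The two kinds
cannot mix: cosets of `U` are equal or disjoint, whereas a coset of `U` and a coset of `L` are
never equal and always meet (`U ⊕ L = 𝔽₂⁴`). -/

open SimpleGraph

local notation "𝔽₂⁴" => Fin 4 → ZMod 2

lemma AQ.adj_add_right_iff {n : ℕ} (a x y : Fin n → ZMod 2) :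
    (AQ n).Adj (x + a) (y + a) ↔ (AQ n).Adj x y := by
  have hsum : x + a + (y + a) = x + y := by
    rw [add_add_add_comm, ZModModule.add_self, add_zero]
  simp only [AQ, hsum, ne_eq, add_left_inj]

def AQ.addRight (n : ℕ) (a : Fin n → ZMod 2) : AQ n ≃g AQ n where
  toEquiv := Equiv.addRight a
  map_rel_iff' := AQ.adj_add_right_iff a _ _

def AQ.recenter {n : ℕ} (g : AQ n ≃g AQ n) (z : Fin n → ZMod 2) : AQ n ≃g AQ n :=
  (AQ.addRight n z).trans (g.trans (AQ.addRight n (g z)))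

lemma AQ.recenter_apply {n : ℕ} (g : AQ n ≃g AQ n) (z x : Fin n → ZMod 2) :
    AQ.recenter g z x = g (x + z) + g z :=
  rfl

lemma AQ.recenter_zero {n : ℕ} (g : AQ n ≃g AQ n) (z : Fin n → ZMod 2) :
    AQ.recenter g z 0 = 0 := by
  rw [AQ.recenter_apply, zero_add, ZModModule.add_self]

lemma image_coset (g : AQ 4 ≃g AQ 4) (K : Set 𝔽₂⁴) (z : 𝔽₂⁴) :
    ⇑g '' coset K z = coset (AQ.recenter g z '' K) (g z) := by
  simp only [coset, Set.image_image, AQ.recenter_apply, add_assoc, ZModModule.add_self,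
    add_zero]

lemma mem_coset_iff (K : Set 𝔽₂⁴) (x z : 𝔽₂⁴) : x ∈ coset K z ↔ x + z ∈ K := by
  refine ⟨?_, fun hx => ⟨x + z, hx, ?_⟩⟩
  · rintro ⟨y, hy, rfl⟩
    rwa [add_assoc, ZModModule.add_self, add_zero]
  · show x + z + z = x
    rw [add_assoc, ZModModule.add_self, add_zero]

def genSetFour : Finset 𝔽₂⁴ :=
  {![1,0,0,0], ![0,1,0,0], ![0,0,1,0], ![0,0,0,1], ![0,0,1,1], ![0,1,1,1], ![1,1,1,1]}

lemma mem_genSet_four_iff (x : 𝔽₂⁴) : x ∈ genSet 4 ↔ x ∈ genSetFour := by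
  constructor
  · rintro (⟨j, rfl⟩ | ⟨k, hk₂, hk₄, rfl⟩)
    · fin_cases j <;> decide
    · interval_cases k <;> decide
  · intro hx
    simp only [genSetFour, Finset.mem_insert, Finset.mem_singleton] at hx
    rcases hx with rfl | rfl | rfl | rfl | rfl | rfl | rfl
    · exact Or.inl ⟨0, by decide⟩
    · exact Or.inl ⟨1, by decide⟩
    · exact Or.inl ⟨2, by decide⟩
    · exact Or.inl ⟨3, by decide⟩
    · exact Or.inr ⟨2, le_rfl, by norm_num, by decide⟩
    · exact Or.inr ⟨3, by norm_num, by norm_num, by decide⟩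
    · exact Or.inr ⟨4, by norm_num, le_rfl, by decide⟩

instance : DecidableRel (AQ 4).Adj := fun x y =>
  decidable_of_iff (x ≠ y ∧ x + y ∈ genSetFour) (and_congr_right' (mem_genSet_four_iff _).symm)

instance (x : 𝔽₂⁴) : Decidable (x ∈ U) := by delta U; infer_instance

instance (x : 𝔽₂⁴) : Decidable (x ∈ L) := by delta L; infer_instance

set_option synthInstance.maxSize 1024 in
lemma eq_U_or_L_of_isClique_of_pendant {b c d w : 𝔽₂⁴}
    (hb : (AQ 4).Adj 0 b) (hc : (AQ 4).Adj 0 c) (hbc : (AQ 4).Adj b c) (hd : (AQ 4).Adj 0 d)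
    (hbd : (AQ 4).Adj b d) (hcd : (AQ 4).Adj c d) (hw : (AQ 4).Adj w 0)
    (hwb : ¬(AQ 4).Adj w b) (hwc : ¬(AQ 4).Adj w c) (hwd : ¬(AQ 4).Adj w d) :
    ({0, b, c, d} : Set 𝔽₂⁴) = U ∨ ({0, b, c, d} : Set 𝔽₂⁴) = L := by
  have check : ∀ b : 𝔽₂⁴, (AQ 4).Adj 0 b → ∀ c, (AQ 4).Adj 0 c → (AQ 4).Adj b c →
      ∀ d, (AQ 4).Adj 0 d → (AQ 4).Adj b d → (AQ 4).Adj c d →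
      ∀ w, (AQ 4).Adj w 0 → ¬(AQ 4).Adj w b → ¬(AQ 4).Adj w c → ¬(AQ 4).Adj w d →
      (∀ x, x ∈ ({0, b, c, d} : Set 𝔽₂⁴) ↔ x ∈ U) ∨
      (∀ x, x ∈ ({0, b, c, d} : Set 𝔽₂⁴) ↔ x ∈ L) := by
    decide
  exact (check b hb c hc hbc d hd hbd hcd w hw hwb hwc hwd).imp Set.ext Set.ext

lemma image_U_eq_U_or_L (h : AQ 4 ≃g AQ 4) (h0 : h 0 = 0) : h '' U = U ∨ h '' U = L := by
  have hU : U = {0, ![0,0,1,0], ![0,0,0,1], ![0,0,1,1]} := by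
    rw [U, show (![0,0,0,0] : 𝔽₂⁴) = 0 by decide]
  have adj (x y : 𝔽₂⁴) (hxy : (AQ 4).Adj x y) : (AQ 4).Adj (h x) (h y) := h.map_adj_iff.2 hxy
  have nonadj (x y : 𝔽₂⁴) (hxy : ¬(AQ 4).Adj x y) : ¬(AQ 4).Adj (h x) (h y) :=
    mt h.map_adj_iff.1 hxy
  have adj₀ (y : 𝔽₂⁴) (hy : (AQ 4).Adj 0 y) : (AQ 4).Adj 0 (h y) := h0 ▸ adj 0 y hy
  rw [hU, Set.image_insert_eq, Set.image_insert_eq, Set.image_insert_eq, Set.image_singleton,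
    h0, ← hU]
  refine eq_U_or_L_of_isClique_of_pendant (w := h ![1,0,0,0]) (adj₀ _ ?_) (adj₀ _ ?_) (adj _ _ ?_)
    (adj₀ _ ?_) (adj _ _ ?_) (adj _ _ ?_) (adj₀ _ ?_).symm (nonadj _ _ ?_) (nonadj _ _ ?_)
    (nonadj _ _ ?_) <;> decide

lemma image_coset_U (g : AQ 4 ≃g AQ 4) (z : 𝔽₂⁴) :
    ⇑g '' coset U z = coset U (g z) ∨ ⇑g '' coset U z = coset L (g z) := by
  rw [image_coset]
  exact (image_U_eq_U_or_L _ (AQ.recenter_zero g z)).imp (congrArg (coset · (g z)))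
    (congrArg (coset · (g z)))

lemma coset_U_eq_or_disjoint (a b : 𝔽₂⁴) :
    coset U a = coset U b ∨ Disjoint (coset U a) (coset U b) := by
  have check : ∀ a b : 𝔽₂⁴, (∀ x, x + a ∈ U ↔ x + b ∈ U) ∨ ∀ x, x + a ∈ U → x + b ∉ U := by
    decide
  refine (check a b).imp (fun h => Set.ext fun x => ?_) (fun h => Set.disjoint_left.2 fun x => ?_)
  · simpa only [mem_coset_iff] using h x
  · simpa only [mem_coset_iff] using h x

lemma coset_U_ne_coset_L (a b : 𝔽₂⁴) : coset U a ≠ coset L b := by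
  have check : ∀ a b : 𝔽₂⁴, ∃ x, ¬(x + a ∈ U ↔ x + b ∈ L) := by decide
  intro h
  obtain ⟨x, hx⟩ := check a b
  exact hx (by rw [← mem_coset_iff, ← mem_coset_iff, h])

lemma coset_U_inter_coset_L_nonempty (a b : 𝔽₂⁴) : (coset U a ∩ coset L b).Nonempty := by
  have check : ∀ a b : 𝔽₂⁴, ∃ x, x + a ∈ U ∧ x + b ∈ L := by decide
  simpa only [Set.Nonempty, Set.mem_inter_iff, mem_coset_iff] using check a b

lemma not_image_coset_U_eq_coset_U_and_coset_L (g : AQ 4 ≃g AQ 4) {z₁ z₂ w₁ w₂ : 𝔽₂⁴}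
    (h₁ : ⇑g '' coset U z₁ = coset U w₁) (h₂ : ⇑g '' coset U z₂ = coset L w₂) : False := by
  rcases coset_U_eq_or_disjoint z₁ z₂ with heq | hdisj
  · rw [heq, h₂] at h₁
    exact coset_U_ne_coset_L w₁ w₂ h₁.symm
  · have himage := (Set.disjoint_image_iff g.injective).2 hdisj
    rw [h₁, h₂] at himage
    exact (coset_U_inter_coset_L_nonempty w₁ w₂).not_disjoint himage

/-- Every automorphism of `AQ_4` either maps every coset of `U` to a coset of
`U`, or maps every coset of `U` to a coset of `L`; i.e. the set of cosets of
`U` is a block of the action of `Aut(AQ_4)` on the eight 4-cliques given by the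
cosets of `U` and of `L`. -/
theorem AQ4_upper_cliques_block (g : AQ 4 ≃g AQ 4) :
    (∀ z : Fin 4 → ZMod 2, ∃ w, ⇑g '' coset U z = coset U w) ∨
    (∀ z : Fin 4 → ZMod 2, ∃ w, ⇑g '' coset U z = coset L w) := by
  rcases image_coset_U g 0 with h₀ | h₀
  · refine Or.inl fun z => (image_coset_U g z).elim (⟨_, ·⟩) fun h => ?_
    exact (not_image_coset_U_eq_coset_U_and_coset_L g h₀ h).elim
  · refine Or.inr fun z => (image_coset_U g z).elim (fun h => ?_) (⟨_, ·⟩)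
    exact (not_image_coset_U_eq_coset_U_and_coset_L g h h₀).elim
end

section
/- For every n ≥ 4, the clique number of the augmented cube graph AQ_n equals 4, and AQ_n has exactly (n − 1)·2^(n−2) cliques of size 4. -/
/-!
The map `x ↦ (x_i + x_{i-1})_i` (with `x_0 = 0`) is a linear automorphism of `𝔽₂ⁿ` sending
`v_k` to `e_{n-k+1}`, `e_j` to `e_j + e_{j+1}` for `j < n`, and `e_n` to itself. It therefore
carries `AQ_n` onto the Cayley sum graph of `𝔽₂ⁿ` generated by the nonzero vectors supported on
an edge `{i, i+1}` of the path `1 — 2 — ⋯ — n`. If the supports of `a`, `b` and `a + b` each have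
diameter at most one in the path, so does the union of the supports of `a` and `b`, since a
coordinate in the support of only one of them lies in the support of `a + b`. Hence a clique
through `x` lies in a coset `x + ⟨e_i, e_{i+1}⟩`, which has 4 elements and is itself a clique.
So the clique number is 4, and the 4-cliques are the `2^(n-2)` cosets of each of the `n - 1`
planes `⟨e_i, e_{i+1}⟩`.
-/

open Function Finset

section CayleySumGraph

variable {V W : Type*}

def cayleySumGraph [AddCommMagma V] (S : Set V) : SimpleGraph V where
  Adj x y := x ≠ y ∧ x + y ∈ S
  symm := ⟨fun x y h => ⟨h.1.symm, add_comm x y ▸ h.2⟩⟩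
  loopless := ⟨fun _ h => h.1 rfl⟩

theorem cayleySumGraph_eq_map [AddCommMonoid V] [AddCommMonoid W] {S : Set V} {T : Set W}
    (e : W ≃+ V) (h : ∀ w, e w ∈ S ↔ w ∈ T) :
    cayleySumGraph S = (cayleySumGraph T).map e.toEquiv.toEmbedding := by
  rw [← SimpleGraph.comap_symm]
  ext x y
  simp [cayleySumGraph, ← h]

end CayleySumGraph

theorem SimpleGraph.cliqueNum_eq_of_isNClique_of_cliqueFree {α : Type*} [Finite α]
    {G : SimpleGraph α} {k : ℕ} {s : Finset α} (hs : G.IsNClique k s)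
    (hG : G.CliqueFree (k + 1)) : G.cliqueNum = k := by
  obtain ⟨t, ht⟩ := G.exists_isNClique_cliqueNum
  refine le_antisymm ?_ (hs.card_eq ▸ hs.isClique.card_le_cliqueNum)
  by_contra! h
  exact hG.mono h t ht

theorem Function.rel_on_support_union_of_add {ι M : Type*} [AddZeroClass M]
    {r : ι → ι → Prop} {a b : ι → M} (ha : ∀ i ∈ support a, ∀ j ∈ support a, r i j)
    (hb : ∀ i ∈ support b, ∀ j ∈ support b, r i j)
    (hab : ∀ i ∈ support (a + b), ∀ j ∈ support (a + b), r i j) :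
    ∀ i ∈ support a ∪ support b, ∀ j ∈ support a ∪ support b, r i j := by
  intro i hi j hj
  by_contra hr
  have hA : ¬(i ∈ support a ∧ j ∈ support a) := fun h => hr (ha i h.1 j h.2)
  have hB : ¬(i ∈ support b ∧ j ∈ support b) := fun h => hr (hb i h.1 j h.2)
  have hsum : ∀ k, (k ∈ support a ∧ k ∉ support b) ∨ (k ∈ support b ∧ k ∉ support a) →
      k ∈ support (a + b) := by
    rintro k (⟨hka, hkb⟩ | ⟨hkb, hka⟩) <;> simp_all
  rw [Set.mem_union] at hi hj
  exact hr (hab i (hsum i (by tauto)) j (hsum j (by tauto)))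

section AgreeOff

variable {ι β : Type*} [Fintype ι] [DecidableEq ι] [Fintype β]

def agreeOff (s : Finset ι) (x : ι → β) : Finset (ι → β) :=
  Fintype.piFinset fun i => if i ∈ s then univ else {x i}

theorem mem_agreeOff {s : Finset ι} {x y : ι → β} : y ∈ agreeOff s x ↔ ∀ i ∉ s, y i = x i := by
  simp only [agreeOff, Fintype.mem_piFinset]
  refine forall_congr' fun i => ?_
  by_cases hi : i ∈ s <;> simp [hi]

theorem card_agreeOff (s : Finset ι) (x : ι → β) : #(agreeOff s x) = Fintype.card β ^ #s := by
  simp [agreeOff, Fintype.card_piFinset, apply_ite, Finset.prod_ite_mem]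

theorem agreeOff_eq_agreeOff_iff {s : Finset ι} {x y : ι → β} :
    agreeOff s x = agreeOff s y ↔ y ∈ agreeOff s x := by
  refine ⟨fun h => h ▸ mem_agreeOff.2 fun _ _ => rfl, fun h => ?_⟩
  ext z
  simp only [mem_agreeOff] at h ⊢
  exact forall₂_congr fun i hi => by rw [h i hi, eq_comm]

theorem card_image_agreeOff [DecidableEq β] [Nonempty β] (s : Finset ι) :
    #(univ.image (agreeOff (β := β) s)) = Fintype.card β ^ (Fintype.card ι - #s) := by
  have hfiber : ∀ t ∈ univ.image (agreeOff s), #{x : ι → β | agreeOff s x = t} =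
      Fintype.card β ^ #s := by
    simp only [mem_image, mem_univ, true_and, forall_exists_index, forall_apply_eq_imp_iff]
    intro x
    rw [← card_agreeOff s x]
    congr 1
    ext y
    simp [eq_comm, agreeOff_eq_agreeOff_iff]
  have h := card_eq_sum_card_image (agreeOff s) (univ : Finset (ι → β))
  rw [sum_congr rfl hfiber, sum_const, smul_eq_mul, card_univ, Fintype.card_fun,
    ← pow_sub_mul_pow _ (card_le_univ s)] at h
  exact (Nat.eq_of_mul_eq_mul_right (by positivity) h).symm

theorem subset_of_agreeOff_eq [Nontrivial β] {s s' : Finset ι} {x x' : ι → β}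
    (h : agreeOff s x = agreeOff s' x') : s ⊆ s' := by
  intro i hi
  by_contra hi'
  obtain ⟨b, hb⟩ := exists_ne (x' i)
  have hmem : update x i b ∈ agreeOff s' x' :=
    h ▸ mem_agreeOff.2 fun j hj => update_of_ne (ne_of_mem_of_not_mem hi hj).symm _ _
  exact hb (by simpa using mem_agreeOff.1 hmem i hi')

theorem eq_of_agreeOff_eq [Nontrivial β] {s s' : Finset ι} {x x' : ι → β}
    (h : agreeOff s x = agreeOff s' x') : s = s' :=
  (subset_of_agreeOff_eq h).antisymm (subset_of_agreeOff_eq h.symm)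

end AgreeOff

def IsNarrow {n : ℕ} (s : Set (Fin n)) : Prop := ∀ i ∈ s, ∀ j ∈ s, (i : ℕ) ≤ j + 1

def pathEdge (n m : ℕ) : Finset (Fin n) := {i | (i : ℕ) = m ∨ (i : ℕ) = m + 1}

def pathGen (n : ℕ) : Set (Fin n → ZMod 2) := {y | y ≠ 0 ∧ IsNarrow (support y)}

def pathCayley (n : ℕ) : SimpleGraph (Fin n → ZMod 2) := cayleySumGraph (pathGen n)

section PathCayley

variable {n : ℕ}

theorem isNarrow_of_subset_pathEdge {s : Set (Fin n)} {m : ℕ} (h : s ⊆ pathEdge n m) :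
    IsNarrow s := by
  intro i hi j hj
  have hi := h hi
  have hj := h hj
  simp only [pathEdge, coe_filter, mem_univ, true_and, Set.mem_ofPred_eq] at hi hj
  omega

theorem IsNarrow.exists_subset_pathEdge (hn : 2 ≤ n) {s : Set (Fin n)} (hs : IsNarrow s) :
    ∃ m, m + 1 < n ∧ s ⊆ pathEdge n m := by
  rcases s.eq_empty_or_nonempty with rfl | ⟨i, hi⟩
  · exact ⟨0, by omega, Set.empty_subset _⟩
  have hmem : ∀ {m : ℕ} {k : Fin n}, (k : ℕ) = m ∨ (k : ℕ) = m + 1 →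
      k ∈ (pathEdge n m : Set (Fin n)) := by
    simp [pathEdge]
  by_cases hbelow : ∃ j ∈ s, (j : ℕ) < i
  · obtain ⟨j, hj, hji⟩ := hbelow
    refine ⟨j, by have := hs i hi j hj; omega, fun k hk => hmem ?_⟩
    have := hs i hi j hj
    have := hs k hk i hi
    have := hs i hi k hk
    have := hs k hk j hj
    have := hs j hj k hk
    omega
  · push Not at hbelow
    refine ⟨min i (n - 2), by omega, fun k hk => hmem ?_⟩
    have := hbelow k hk
    have := hs k hk i hi
    have := k.isLt
    omega

theorem card_pathEdge {m : ℕ} (hm : m + 1 < n) : #(pathEdge n m) = 2 := by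
  rw [card_eq_two]
  exact ⟨⟨m, by omega⟩, ⟨m + 1, hm⟩, by simp [Fin.ext_iff],
    by ext i; simp [pathEdge, Fin.ext_iff]⟩

theorem pathEdge_inj {m m' : ℕ} (hm : m + 1 < n) (hm' : m' + 1 < n)
    (h : pathEdge n m = pathEdge n m') : m = m' := by
  have h1 : (⟨m, by omega⟩ : Fin n) ∈ pathEdge n m' := h ▸ by simp [pathEdge]
  have h2 : (⟨m', by omega⟩ : Fin n) ∈ pathEdge n m := h ▸ by simp [pathEdge]
  simp only [pathEdge, mem_filter, mem_univ, true_and] at h1 h2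
  omega

theorem card_agreeOff_pathEdge {m : ℕ} (hm : m + 1 < n) (x : Fin n → ZMod 2) :
    #(agreeOff (pathEdge n m) x) = 4 := by
  rw [card_agreeOff, ZMod.card, card_pathEdge hm]
  norm_num

theorem pathCayley_isClique_iff {t : Set (Fin n → ZMod 2)} :
    (pathCayley n).IsClique t ↔ ∀ y ∈ t, ∀ z ∈ t, IsNarrow (support (y + z)) := by
  refine ⟨fun ht y hy z hz => ?_, fun ht y hy z hz hyz => ⟨hyz, ?_, ht y hy z hz⟩⟩
  · rcases eq_or_ne y z with rfl | hyz
    · simp [ZModModule.add_self, IsNarrow]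
    · exact (ht hy hz hyz).2.2
  · rwa [Ne, ← ZModModule.sub_eq_add, sub_eq_zero]

theorem pathCayley_exists_subset_agreeOff (hn : 2 ≤ n) {t : Finset (Fin n → ZMod 2)}
    (ht : (pathCayley n).IsClique (t : Set (Fin n → ZMod 2))) {x : Fin n → ZMod 2} (hx : x ∈ t) :
    ∃ m, m + 1 < n ∧ t ⊆ agreeOff (pathEdge n m) x := by
  rw [pathCayley_isClique_iff] at ht
  have hW : IsNarrow (⋃ y ∈ t, support (y + x)) := by
    intro i hi j hj
    simp only [Set.mem_iUnion] at hi hj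
    obtain ⟨y, hy, hi⟩ := hi
    obtain ⟨z, hz, hj⟩ := hj
    refine rel_on_support_union_of_add (ht y hy x hx) (ht z hz x hx) ?_ i (Or.inl hi) j (Or.inr hj)
    rw [add_comm z, ZModModule.add_add_add_cancel]
    exact ht y hy z hz
  obtain ⟨m, hm, hsub⟩ := hW.exists_subset_pathEdge hn
  refine ⟨m, hm, fun y hy => mem_agreeOff.2 fun i hi => ?_⟩
  by_contra hne
  exact hi (hsub (Set.mem_biUnion hy (by simpa [CharTwo.add_eq_zero] using hne)))

theorem pathCayley_isClique_agreeOff (m : ℕ) (x : Fin n → ZMod 2) :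
    (pathCayley n).IsClique (agreeOff (pathEdge n m) x : Set (Fin n → ZMod 2)) := by
  rw [pathCayley_isClique_iff]
  intro y hy z hz
  refine isNarrow_of_subset_pathEdge (m := m) fun i hi => ?_
  by_contra hi'
  rw [mem_coe, mem_agreeOff] at hy hz
  exact hi (by simp [hy i hi', hz i hi', CharTwo.add_self_eq_zero])

theorem pathCayley_cliqueFree_five (hn : 2 ≤ n) : (pathCayley n).CliqueFree 5 := by
  intro t ht
  obtain ⟨x, hx⟩ : t.Nonempty := by rw [← card_pos, ht.card_eq]; norm_num
  obtain ⟨m, hm, hsub⟩ := pathCayley_exists_subset_agreeOff hn ht.isClique hx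
  have := card_le_card hsub
  rw [ht.card_eq, card_agreeOff_pathEdge hm] at this
  omega

theorem pathCayley_setOf_isNClique_four (hn : 2 ≤ n) :
    {t | (pathCayley n).IsNClique 4 t} =
      ↑((range (n - 1)).biUnion fun m => univ.image (agreeOff (β := ZMod 2) (pathEdge n m))) := by
  ext t
  simp only [Set.mem_ofPred_eq, coe_biUnion, mem_coe, mem_range, coe_image, coe_univ,
    Set.image_univ, Set.mem_iUnion, Set.mem_range]
  constructor
  · intro ht
    obtain ⟨x, hx⟩ : t.Nonempty := by rw [← card_pos, ht.card_eq]; norm_num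
    obtain ⟨m, hm, hsub⟩ := pathCayley_exists_subset_agreeOff hn ht.isClique hx
    refine ⟨m, by omega, x, (eq_of_subset_of_card_le hsub ?_).symm⟩
    rw [ht.card_eq, card_agreeOff_pathEdge hm]
  · rintro ⟨m, hm, x, rfl⟩
    exact ⟨pathCayley_isClique_agreeOff m x, card_agreeOff_pathEdge (by omega) x⟩

theorem pathCayley_ncard_setOf_isNClique_four (hn : 2 ≤ n) :
    {t | (pathCayley n).IsNClique 4 t}.ncard = (n - 1) * 2 ^ (n - 2) := by
  rw [pathCayley_setOf_isNClique_four hn, Set.ncard_coe_finset, card_biUnion]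
  · rw [sum_const_nat fun m hm => ?_, card_range]
    rw [mem_range] at hm
    rw [card_image_agreeOff, ZMod.card, Fintype.card_fin, card_pathEdge (by omega)]
  · intro m hm m' hm' hne
    simp only [onFun, disjoint_left, mem_image, mem_univ, true_and]
    rintro _ ⟨x, rfl⟩ ⟨x', h⟩
    simp only [coe_range, Set.mem_Iio] at hm hm'
    exact hne (pathEdge_inj (by omega) (by omega) (eq_of_agreeOff_eq h).symm)

end PathCayley

def pathDiff (n : ℕ) : (Fin n → ZMod 2) →+ (Fin n → ZMod 2) where
  toFun x i := x i + if h : (i : ℕ) = 0 then 0 else x ⟨i - 1, by omega⟩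
  map_zero' := by ext; simp
  map_add' x y := by ext i; by_cases h : (i : ℕ) = 0 <;> simp [h, add_add_add_comm]

section PathDiff

variable {n : ℕ}

theorem pathDiff_injective : Injective (pathDiff n) := by
  rw [injective_iff_map_eq_zero]
  intro x hx
  funext ⟨i, hi⟩
  induction i with
  | zero => simpa [pathDiff] using congrFun hx ⟨0, hi⟩
  | succ k ih => simpa [pathDiff, ih (by omega)] using congrFun hx ⟨k + 1, hi⟩

theorem lastOnes_one (hn : 0 < n) : lastOnes n 1 = stdBasis n ⟨n - 1, by omega⟩ := by
  ext i
  simp only [lastOnes, stdBasis, Fin.ext_iff]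
  split_ifs <;> first | rfl | omega

theorem lastOnes_mem_genSet {k : ℕ} (hk : 1 ≤ k) (hkn : k ≤ n) : lastOnes n k ∈ genSet n := by
  rcases (show k = 1 ∨ 2 ≤ k by omega) with rfl | hk2
  · exact Or.inl ⟨_, lastOnes_one hkn⟩
  · exact Or.inr ⟨k, hk2, hkn, rfl⟩

theorem pathDiff_lastOnes {k : ℕ} (hk : 1 ≤ k) (hkn : k ≤ n) :
    pathDiff n (lastOnes n k) = stdBasis n ⟨n - k, by omega⟩ := by
  ext i
  simp only [pathDiff, AddMonoidHom.coe_mk, ZeroHom.coe_mk, lastOnes, stdBasis, Fin.ext_iff]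
  split_ifs <;> first | rfl | omega

theorem pathDiff_stdBasis (j : Fin n) (hj : (j : ℕ) + 1 < n) :
    pathDiff n (stdBasis n j) = stdBasis n j + stdBasis n ⟨j + 1, hj⟩ := by
  ext i
  simp only [pathDiff, AddMonoidHom.coe_mk, ZeroHom.coe_mk, stdBasis, Pi.add_apply, Fin.ext_iff]
  split_ifs <;> first | rfl | omega

theorem stdBasis_mem_pathGen (i : Fin n) : stdBasis n i ∈ pathGen n := by
  refine ⟨fun h => by simpa [stdBasis] using congrFun h i, isNarrow_of_subset_pathEdge (m := i) ?_⟩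
  intro k hk
  simp_all [stdBasis, pathEdge]

theorem stdBasis_add_stdBasis_succ_mem_pathGen (i : Fin n) (hi : (i : ℕ) + 1 < n) :
    stdBasis n i + stdBasis n ⟨i + 1, hi⟩ ∈ pathGen n := by
  refine ⟨fun h => by simpa [stdBasis, Fin.ext_iff] using congrFun h i,
    isNarrow_of_subset_pathEdge (m := i) fun k hk => ?_⟩
  simp only [mem_support, Pi.add_apply, stdBasis, Fin.ext_iff] at hk
  simp only [pathEdge, coe_filter, mem_univ, true_and, Set.mem_ofPred_eq]
  split_ifs at hk <;> first | omega | simp at hk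

theorem eq_stdBasis_of_mem_pathGen {y : Fin n → ZMod 2} (hy : y ∈ pathGen n) :
    (∃ i, y = stdBasis n i) ∨
      ∃ (i : Fin n) (h : (i : ℕ) + 1 < n), y = stdBasis n i + stdBasis n ⟨i + 1, h⟩ := by
  obtain ⟨hy0, hy⟩ := hy
  obtain ⟨i, hi⟩ : ∃ i, y i ≠ 0 := by
    by_contra h
    push Not at h
    exact hy0 (funext h)
  by_cases hpair : ∃ j, y j ≠ 0 ∧ j ≠ i
  · obtain ⟨j, hj, hji⟩ := hpair
    have hij := hy i hi j hj
    have hji' := hy j hj i hi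
    have hsupp : ∀ k, y k ≠ 0 ↔ k = i ∨ k = j := by
      refine fun k => ⟨fun hk => ?_, by rintro (rfl | rfl) <;> assumption⟩
      have := hy k hk i hi
      have := hy i hi k hk; have := hy k hk j hj; have := hy j hj k hk
      simp only [Fin.ext_iff] at hji ⊢
      omega
    right
    refine ⟨min i j, by rw [Fin.coe_min]; omega, funext fun k => ?_⟩
    have hk := hsupp k
    by_cases hyk : y k = 0
    · simp only [Ne, hyk, not_true, false_iff, not_or] at hk
      simp only [hyk, Pi.add_apply, stdBasis, Fin.ext_iff, Fin.coe_min] at hk hji ⊢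
      split_ifs <;> first | rfl | omega
    · rw [Fin.eq_one_of_ne_zero _ hyk]
      simp only [Ne, hyk, not_false_eq_true, true_iff] at hk
      simp only [Pi.add_apply, stdBasis, Fin.ext_iff, Fin.coe_min] at hk hji ⊢
      split_ifs <;> first | rfl | omega
  · push Not at hpair
    refine Or.inl ⟨i, funext fun k => ?_⟩
    by_cases hk : k = i
    · subst hk
      simp only [stdBasis, if_true]
      exact Fin.eq_one_of_ne_zero _ hi
    · simpa [stdBasis, hk] using mt (hpair k) hk

theorem mem_genSet_iff_pathDiff_mem {x : Fin n → ZMod 2} :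
    x ∈ genSet n ↔ pathDiff n x ∈ pathGen n := by
  constructor
  · rintro (⟨j, rfl⟩ | ⟨k, hk2, hkn, rfl⟩)
    · by_cases hj : (j : ℕ) + 1 < n
      · rw [pathDiff_stdBasis j hj]
        exact stdBasis_add_stdBasis_succ_mem_pathGen j hj
      · have hj' : j = ⟨n - 1, by omega⟩ := Fin.ext (show (j : ℕ) = n - 1 by omega)
        rw [hj', ← lastOnes_one (by omega), pathDiff_lastOnes le_rfl (by omega)]
        exact stdBasis_mem_pathGen _
    · rw [pathDiff_lastOnes (by omega) hkn]
      exact stdBasis_mem_pathGen _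
  · intro hx
    rcases eq_stdBasis_of_mem_pathGen hx with ⟨i, hi⟩ | ⟨i, hi, h⟩
    · have hx : x = lastOnes n (n - i) := pathDiff_injective <| by
        rw [hi, pathDiff_lastOnes (by omega) (by omega)]
        congr 1
        ext
        simp only
        omega
      exact hx ▸ lastOnes_mem_genSet (by omega) (by omega)
    · exact Or.inl ⟨i, pathDiff_injective (by rw [h, pathDiff_stdBasis])⟩

end PathDiff

noncomputable def pathDiffEquiv (n : ℕ) : (Fin n → ZMod 2) ≃+ (Fin n → ZMod 2) :=
  AddEquiv.ofBijective (pathDiff n)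
    ⟨pathDiff_injective, Finite.injective_iff_surjective.1 pathDiff_injective⟩

theorem AQ_eq_map_pathCayley (n : ℕ) :
    AQ n = (pathCayley n).map (pathDiffEquiv n).symm.toEquiv.toEmbedding :=
  cayleySumGraph_eq_map _ fun y => by
    rw [mem_genSet_iff_pathDiff_mem]
    change pathDiffEquiv n _ ∈ _ ↔ _
    rw [AddEquiv.apply_symm_apply]

/-- For `n ≥ 4`, the clique number of `AQ_n` is 4, and `AQ_n` has exactly
`(n - 1) * 2 ^ (n - 2)` cliques of size 4. -/
theorem AQn_cliqueNum_and_count (n : ℕ) (hn : 4 ≤ n) :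
    (AQ n).cliqueNum = 4 ∧
      {t : Finset (Fin n → ZMod 2) | (AQ n).IsNClique 4 t}.ncard = (n - 1) * 2 ^ (n - 2) := by
  set e := (pathDiffEquiv n).symm.toEquiv.toEmbedding
  have hAQ : AQ n = (pathCayley n).map e := AQ_eq_map_pathCayley n
  have hfour : (pathCayley n).IsNClique 4 (agreeOff (pathEdge n 0) 0) :=
    ⟨pathCayley_isClique_agreeOff 0 0, card_agreeOff_pathEdge (by omega) 0⟩
  refine ⟨SimpleGraph.cliqueNum_eq_of_isNClique_of_cliqueFree (hAQ ▸ hfour.map) ?_, ?_⟩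
  · intro t ht
    rw [hAQ, SimpleGraph.isNClique_map_iff (by norm_num)] at ht
    obtain ⟨s, hs, -⟩ := ht
    exact pathCayley_cliqueFree_five (by omega) s hs
  · have hcliques :
        {t | (AQ n).IsNClique 4 t} = Finset.map e '' {t | (pathCayley n).IsNClique 4 t} := by
      ext t
      simp [hAQ, SimpleGraph.isNClique_map_iff, eq_comm]
    rw [hcliques, Set.ncard_image_of_injective _ (Finset.map_injective e),
      pathCayley_ncard_setOf_isNClique_four (by omega)]
end

section
/- Let S ⊆ 𝔽₂ⁿ with 0 ∉ S, let X be the Cayley graph of 𝔽₂ⁿ with respect to S, let G = Aut(X), and let G_0 be the stabilizer of 0 in G. If H is a subgroup of G with G_0 ≤ H, then there exists an additive subgroup K of 𝔽₂ⁿ with g(K) = K for every g ∈ G_0, such that H = { f ∈ Aut(X) : there exist z ∈ K and g ∈ G_0 with f(x) = g(x + z) for all x }. -/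
/-- The Cayley graph of `𝔽₂ⁿ` with respect to a subset `S`: distinct vertices
`x` and `y` are adjacent iff `x + y ∈ S`. -/
def Cay (n : ℕ) (S : Set (Fin n → ZMod 2)) : SimpleGraph (Fin n → ZMod 2) where
  Adj x y := x ≠ y ∧ x + y ∈ S
  symm := ⟨fun x y h => ⟨h.1.symm, by rw [add_comm]; exact h.2⟩⟩
  loopless := ⟨fun x h => h.1 rfl⟩

/-!
The translations `τ_z : x ↦ x + z` are automorphisms acting regularly on the vertices. A subgroup
`H ⊇ G₀` is a union of cosets `G₀ f`, and `G₀ f = G₀ τ_z` for `z = -f⁻¹(0)`, so `H` is the union of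
the `G₀ τ_z` with `z` in the orbit `K = H • 0`. This `K` is also the set of `z` with `τ_z ∈ H`,
which makes it an additive subgroup, and the orbit description makes it `G₀`-invariant.
-/

open MulAction

theorem MulAction.mem_of_smul_eq_of_stabilizer_le {G α : Type*} [Group G] [MulAction G α]
    {H : Subgroup G} {a : α} (hH : stabilizer G a ≤ H) {g h : G} (hh : h ∈ H)
    (hgh : g • a = h • a) : g ∈ H := by
  have hstab : h⁻¹ * g ∈ H := hH <| by rw [mem_stabilizer_iff, mul_smul, hgh, inv_smul_smul]
  simpa using H.mul_mem hh hstab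

section Translations

variable {G V : Type*} [Group G] [AddGroup V] [MulAction G V] {τ : V → G} {H : Subgroup G}

theorem inv_smul_zero_of_smul_eq_add (hτ : ∀ z v, τ z • v = v + z) (z : V) :
    (τ z)⁻¹ • (0 : V) = -z := by
  rw [inv_smul_eq_iff, hτ, neg_add_cancel]

theorem mem_of_smul_zero_eq (hτ : ∀ z v, τ z • v = v + z)
    (hH : stabilizer G (0 : V) ≤ H) {h : G} (hh : h ∈ H) {z : V} (hz : h • (0 : V) = z) :
    τ z ∈ H :=
  mem_of_smul_eq_of_stabilizer_le hH hh (by rw [hτ, zero_add, hz])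

/-- Equivalently, the orbit `H • 0`. -/
def translationSubgroup (hτ : ∀ z v, τ z • v = v + z)
    (hH : stabilizer G (0 : V) ≤ H) : AddSubgroup V where
  carrier := {z | τ z ∈ H}
  zero_mem' := mem_of_smul_zero_eq hτ hH H.one_mem (one_smul G 0)
  add_mem' {a b} ha hb :=
    mem_of_smul_zero_eq hτ hH (H.mul_mem hb ha) (by rw [mul_smul, hτ, hτ, zero_add])
  neg_mem' {a} ha :=
    mem_of_smul_zero_eq hτ hH (H.inv_mem ha) (inv_smul_zero_of_smul_eq_add hτ a)

theorem smul_mem_translationSubgroup (hτ : ∀ z v, τ z • v = v + z)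
    (hH : stabilizer G (0 : V) ≤ H) {g : G} (hg : g ∈ stabilizer G (0 : V))
    {z : V} (hz : z ∈ translationSubgroup hτ hH) : g • z ∈ translationSubgroup hτ hH :=
  mem_of_smul_zero_eq hτ hH (H.mul_mem (hH hg) hz) (by rw [mul_smul, hτ, zero_add])

theorem image_smul_translationSubgroup (hτ : ∀ z v, τ z • v = v + z)
    (hH : stabilizer G (0 : V) ≤ H) {g : G} (hg : g ∈ stabilizer G (0 : V)) :
    (g • ·) '' (translationSubgroup hτ hH : Set V) = translationSubgroup hτ hH := by
  refine subset_antisymm ?_ fun z hz => ⟨g⁻¹ • z, ?_, smul_inv_smul g z⟩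
  · rintro _ ⟨z, hz, rfl⟩
    exact smul_mem_translationSubgroup hτ hH hg hz
  · exact smul_mem_translationSubgroup hτ hH (inv_mem hg) hz

theorem mem_iff_exists_stabilizer_mul_translation (hτ : ∀ z v, τ z • v = v + z)
    (hH : stabilizer G (0 : V) ≤ H) {f : G} :
    f ∈ H ↔
      ∃ z ∈ translationSubgroup hτ hH, ∃ g ∈ stabilizer G (0 : V), f = g * τ z := by
  constructor
  · intro hf
    have hz : f⁻¹ • (0 : V) ∈ translationSubgroup hτ hH :=
      mem_of_smul_zero_eq hτ hH (H.inv_mem hf) rfl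
    refine ⟨-(f⁻¹ • 0), neg_mem hz, f * (τ (-(f⁻¹ • 0)))⁻¹, ?_, by group⟩
    rw [mem_stabilizer_iff, mul_smul, inv_smul_zero_of_smul_eq_add hτ, neg_neg, smul_inv_smul]
  · rintro ⟨z, hz, g, hg, rfl⟩
    exact H.mul_mem (hH hg) hz

end Translations

namespace Cay

def translate (n : ℕ) (S : Set (Fin n → ZMod 2)) (z : Fin n → ZMod 2) :
    Cay n S ≃g Cay n S where
  toEquiv := Equiv.addRight z
  map_rel_iff' {a b} := by
    have hsum : (a + z) + (b + z) = a + b := by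
      rw [add_add_add_comm, show z + z = 0 from funext fun i => CharTwo.add_self_eq_zero (z i),
        add_zero]
    simp only [Cay, Equiv.coe_addRight, ne_eq, add_left_inj, hsum]

theorem translate_smul (n : ℕ) (S : Set (Fin n → ZMod 2)) (z v : Fin n → ZMod 2) :
    translate n S z • v = v + z :=
  rfl

end Cay

theorem subgroup_containing_stabilizer_eq_RK_G0_general (n : ℕ) (S : Set (Fin n → ZMod 2))
    (H : Subgroup (Cay n S ≃g Cay n S))
    (hH : ∀ g : Cay n S ≃g Cay n S, g 0 = 0 → g ∈ H) :
    ∃ K : AddSubgroup (Fin n → ZMod 2),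
      (∀ g : Cay n S ≃g Cay n S, g 0 = 0 → ⇑g '' (K : Set (Fin n → ZMod 2)) = K) ∧
      (H : Set (Cay n S ≃g Cay n S)) =
        {f | ∃ z ∈ K, ∃ g : Cay n S ≃g Cay n S, g 0 = 0 ∧ ∀ x, f x = g (x + z)} := by
  have hstab : stabilizer (Cay n S ≃g Cay n S) (0 : Fin n → ZMod 2) ≤ H := fun g hg => hH g hg
  have hτ := Cay.translate_smul n S
  refine ⟨translationSubgroup hτ hstab, fun g hg => image_smul_translationSubgroup hτ hstab hg,
    Set.ext fun f => ?_⟩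
  simp only [SetLike.mem_coe, mem_iff_exists_stabilizer_mul_translation hτ hstab,
    mem_stabilizer_iff, RelIso.ext_iff, RelIso.smul_def,
    RelIso.mul_apply, Set.mem_ofPred_eq]
  rfl

/-- If `H` is a subgroup of `Aut(Cay(𝔽₂ⁿ, S))` containing the stabilizer `G₀`
of the zero vertex, then `H = R(K)·G₀` for some additive subgroup `K` of `𝔽₂ⁿ`
invariant under `G₀`. -/
theorem subgroup_containing_stabilizer_eq_RK_G0 (n : ℕ) (S : Set (Fin n → ZMod 2))
    (hS : (0 : Fin n → ZMod 2) ∉ S)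
    (H : Subgroup (Cay n S ≃g Cay n S))
    (hH : ∀ g : Cay n S ≃g Cay n S, g 0 = 0 → g ∈ H) :
    ∃ K : AddSubgroup (Fin n → ZMod 2),
      (∀ g : Cay n S ≃g Cay n S, g 0 = 0 → ⇑g '' (K : Set (Fin n → ZMod 2)) = K) ∧
      (H : Set (Cay n S ≃g Cay n S)) =
        {f | ∃ z ∈ K, ∃ g : Cay n S ≃g Cay n S, g 0 = 0 ∧ ∀ x, f x = g (x + z)} :=
  subgroup_containing_stabilizer_eq_RK_G0_general n S H hH
end

section
/- Let S ⊆ 𝔽₂ⁿ with 0 ∉ S, let X be the Cayley graph of 𝔽₂ⁿ with respect to S, and assume X is normal, i.e., every graph automorphism of X fixing the zero vertex is additive. Let G_0 be the stabilizer of 0 in Aut(X). Then a subset Δ ⊆ 𝔽₂ⁿ with 0 ∈ Δ is a block for the action of Aut(X) on the vertices (i.e., for every g ∈ Aut(X), the image g(Δ) either equals Δ or is disjoint from Δ) if and only if Δ is an additive subgroup of 𝔽₂ⁿ with g(Δ) = Δ for every g ∈ G_0. -/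
namespace MulAction

open scoped Pointwise

variable {M V : Type*} [Group M] [AddGroup V] [MulAction M V] {B : Set V}

theorem exists_addSubgroup_coe_eq_of_isBlock (htrans : ∀ a : V, ∃ t : M, ∀ x, t • x = x + a)
    (hB : IsBlock M B) (h0 : 0 ∈ B) : ∃ K : AddSubgroup V, (K : Set V) = B := by
  have add_right_mem {a b : V} (hb : b ∈ B) (hba : b + a ∈ B) {x : V} (hx : x ∈ B) :
      x + a ∈ B := by
    obtain ⟨t, ht⟩ := htrans a
    have htB : t • B = B := hB.smul_eq_of_mem hb (by rwa [ht])
    rw [← htB, ← ht]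
    exact Set.smul_mem_smul_set hx
  refine ⟨{ carrier := B
            zero_mem' := h0
            add_mem' := fun ha hb => ?_
            neg_mem' := fun ha => ?_ }, rfl⟩
  · exact add_right_mem h0 (by rwa [zero_add]) ha
  · simpa using add_right_mem (a := -_) ha (by rwa [add_neg_cancel]) h0

theorem smul_eq_image_add_right (htrans : ∀ a : V, ∃ t : M, ∀ x, t • x = x + a)
    (hstab : ∀ h : M, h • (0 : V) = 0 → h • B = B) (g : M) :
    g • B = (· + g • (0 : V)) '' B := by
  obtain ⟨t, ht⟩ := htrans (g • (0 : V))
  have hfix : (t⁻¹ * g) • (0 : V) = 0 := by rw [mul_smul, inv_smul_eq_iff, ht, zero_add]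
  calc g • B = t • (t⁻¹ * g) • B := by rw [smul_smul, mul_inv_cancel_left]
    _ = t • B := by rw [hstab _ hfix]
    _ = (· + g • (0 : V)) '' B := by rw [← Set.image_smul]; simp only [ht]

theorem isBlock_of_addSubgroup (htrans : ∀ a : V, ∃ t : M, ∀ x, t • x = x + a)
    (K : AddSubgroup V) (hstab : ∀ h : M, h • (0 : V) = 0 → h • (K : Set V) = K) :
    IsBlock M (K : Set V) := by
  rw [isBlock_iff_smul_eq_of_nonempty]
  intro g hmeet
  rw [smul_eq_image_add_right htrans hstab] at hmeet ⊢
  obtain ⟨_, ⟨b, hb, rfl⟩, hbc⟩ := hmeet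
  have hc : g • (0 : V) ∈ K := (K.add_mem_cancel_left hb).mp hbc
  ext x
  rw [Set.image_add_right, Set.mem_preimage, SetLike.mem_coe, SetLike.mem_coe,
    K.add_mem_cancel_right (K.neg_mem hc)]

theorem isBlock_iff_exists_addSubgroup (htrans : ∀ a : V, ∃ t : M, ∀ x, t • x = x + a)
    (h0 : 0 ∈ B) :
    IsBlock M B ↔
      (∃ K : AddSubgroup V, (K : Set V) = B) ∧ ∀ g : M, g • (0 : V) = 0 → g • B = B := by
  refine ⟨fun hB => ⟨exists_addSubgroup_coe_eq_of_isBlock htrans hB h0,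
    fun g hg => hB.smul_eq_of_mem h0 (by rwa [hg])⟩, ?_⟩
  rintro ⟨⟨K, rfl⟩, hstab⟩
  exact isBlock_of_addSubgroup htrans K hstab

end MulAction

def Cay.translation (n : ℕ) (S : Set (Fin n → ZMod 2)) (a : Fin n → ZMod 2) :
    Cay n S ≃g Cay n S where
  toEquiv := Equiv.addRight a
  map_rel_iff' {x y} := by
    have hsum : x + a + (y + a) = x + y := by
      rw [add_add_add_comm, ZModModule.add_self, add_zero]
    change (x + a ≠ y + a ∧ x + a + (y + a) ∈ S) ↔ (x ≠ y ∧ x + y ∈ S)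
    rw [hsum, ne_eq, add_left_inj]

theorem block_iff_invariant_subgroup_general (n : ℕ) (S : Set (Fin n → ZMod 2))
    (Δ : Set (Fin n → ZMod 2)) (h0 : (0 : Fin n → ZMod 2) ∈ Δ) :
    (∀ g : Cay n S ≃g Cay n S, ⇑g '' Δ = Δ ∨ Disjoint (⇑g '' Δ) Δ) ↔
      ((∃ K : AddSubgroup (Fin n → ZMod 2), (K : Set (Fin n → ZMod 2)) = Δ) ∧
        ∀ g : Cay n S ≃g Cay n S, g 0 = 0 → ⇑g '' Δ = Δ) := by
  have htrans (a : Fin n → ZMod 2) : ∃ t : Cay n S ≃g Cay n S, ∀ x, t • x = x + a :=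
    ⟨Cay.translation n S a, fun _ => rfl⟩
  exact MulAction.isBlock_iff_smul_eq_or_disjoint.symm.trans
    (MulAction.isBlock_iff_exists_addSubgroup htrans h0)

/-- For a normal Cayley graph `X = Cay(𝔽₂ⁿ, S)`, a subset `Δ ∋ 0` is a block of
the action of `Aut(X)` on the vertices iff `Δ` is an additive subgroup of `𝔽₂ⁿ`
invariant under the stabilizer of `0`. -/
theorem block_iff_invariant_subgroup (n : ℕ) (S : Set (Fin n → ZMod 2))
    (hS : (0 : Fin n → ZMod 2) ∉ S)
    (hnormal : ∀ g : Cay n S ≃g Cay n S, g 0 = 0 →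
      ∀ x y : Fin n → ZMod 2, g (x + y) = g x + g y)
    (Δ : Set (Fin n → ZMod 2)) (h0 : (0 : Fin n → ZMod 2) ∈ Δ) :
    (∀ g : Cay n S ≃g Cay n S, ⇑g '' Δ = Δ ∨ Disjoint (⇑g '' Δ) Δ) ↔
      ((∃ K : AddSubgroup (Fin n → ZMod 2), (K : Set (Fin n → ZMod 2)) = Δ) ∧
        ∀ g : Cay n S ≃g Cay n S, g 0 = 0 → ⇑g '' Δ = Δ) :=
  block_iff_invariant_subgroup_general n S Δ h0
end
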